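/- arXiv:2605.24714 — 4 statements merged into one kernel-verified Lean document; each statement's English description precedes it below -/
import Mathlib

section
/- There exist functions τ1, τ2 : ℕ → ℕ ∪ {+∞} such that: (i) b ≤ τ1(b) and τ1(b) ≤ τ2(b) for every b ≥ 1; (ii) τ1 is nondecreasing; and (iii) for every (m,b) ∈ S: if m ≤ τ1(b) then Q0(V★)(m,b) ≤ Q1(V★)(m,b) and Q0(V★)(m,b) ≤ Q2(V★)(m,b) (sensing is optimal); if τ1(b) < m ≤ τ2(b) then Q2(V★)(m,b) ≤ Q0(V★)(m,b) and Q2(V★)(m,b) ≤ Q1(V★)(m,b) (joint sensing and communication is optimal); and if m > τ2(b) then Q1(V★)(m,b) ≤ Q0(V★)(m,b) and Q1(V★)(m,b) ≤ Q2(V★)(m,b) (communication is optimal). In other words, the optimal stationary policy has an ordered two-threshold structure in the AoI state space. -/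
/-- Action-value for sensing (`u = 0`). -/
noncomputable def Q0 (γ lam0 c0 : ℝ) (V : ℕ → ℕ → ℝ) (m b : ℕ) : ℝ :=
  (m : ℝ) + c0 + γ * (lam0 * V (m + 1) 1 + (1 - lam0) * V (m + 1) (b + 1))

/-- Action-value for communication (`u = 1`). -/
noncomputable def Q1 (γ lam1 c1 : ℝ) (V : ℕ → ℕ → ℝ) (m b : ℕ) : ℝ :=
  (m : ℝ) + c1 + γ * (lam1 * V (b + 1) (b + 1) + (1 - lam1) * V (m + 1) (b + 1))

/-- Action-value for joint sensing and communication (`u = 2`). -/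
noncomputable def Q2 (γ lam2 c2 : ℝ) (V : ℕ → ℕ → ℝ) (m b : ℕ) : ℝ :=
  (m : ℝ) + c2 + γ * (lam2 * V (b + 1) 1 + (1 - lam2) * V (m + 1) (b + 1))

/-- The Bellman operator `T`. -/
noncomputable def Tbell (γ lam0 lam1 lam2 c0 c1 c2 : ℝ) (V : ℕ → ℕ → ℝ) (m b : ℕ) : ℝ :=
  min (Q0 γ lam0 c0 V m b) (min (Q1 γ lam1 c1 V m b) (Q2 γ lam2 c2 V m b))

/-!
Value iteration started from `m ↦ L * m` stays in the class `IsShaped` of value functions whose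
increments in `m` lie in `[L, U]`, where `L = 1 / (1 - γ (1 - λ1))` and `U = 1 / (1 - γ)` are the
fixed points of `x = 1 + γ (1 - λ1) x` and `x = 1 + γ x`, which are nondecreasing in `b`, and whose
increments in `m` and (weighted by `λ1 - λ0` against `λ1`) in `b` are dominated by the diagonal
increments. The class is cut out by non-strict inequalities between finitely many values, so it is
closed under pointwise limits, and the iterates converge pointwise to `V★` because `T` contracts
the `ρ ^ m`-weighted distance by the factor `γ ρ < 1`. Assumption 1 enters only through
`(λ0 - λ2) U ≤ λ0 L` and `γ (λ0 - λ2) U ≤ 1`.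

For a shaped `V★`, the differences `Q1 - Q0`, `Q2 - Q0` and `Q1 - Q2` are nonincreasing in `m`,
`Q1 - Q0` and `Q2 - Q0` are nondecreasing in `b`, and sensing is optimal on the diagonal. Hence in
each column `b` the sensing region, and the region where sensing is optimal or `Q2 ≤ Q1`, are
initial segments of `[b, ∞)`; their suprema in `ℕ∞` are `τ1 b ≤ τ2 b`, and `τ1` is monotone
because the sensing region grows with `b`.
-/

open Filter Topology Set

theorem min3_sub_min3_le {x₀ x₁ x₂ y₀ y₁ y₂ c : ℝ} (h₀ : y₀ - x₀ ≤ c) (h₁ : y₁ - x₁ ≤ c)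
    (h₂ : y₂ - x₂ ≤ c) : min y₀ (min y₁ y₂) - min x₀ (min x₁ x₂) ≤ c := by
  rw [sub_le_iff_le_add, ← min_add_add_left, ← min_add_add_left]
  exact min_le_min (by linarith) (min_le_min (by linarith) (by linarith))

theorem le_min3_sub_min3 {x₀ x₁ x₂ y₀ y₁ y₂ c : ℝ} (h₀ : c ≤ y₀ - x₀) (h₁ : c ≤ y₁ - x₁)
    (h₂ : c ≤ y₂ - x₂) : c ≤ min y₀ (min y₁ y₂) - min x₀ (min x₁ x₂) := by
  rw [le_sub_iff_add_le, ← min_add_add_left, ← min_add_add_left]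
  exact min_le_min (by linarith) (min_le_min (by linarith) (by linarith))

theorem Q0_sub_Q0 (γ lam0 c0 : ℝ) (V : ℕ → ℕ → ℝ) (m b m' b' : ℕ) :
    Q0 γ lam0 c0 V m' b' - Q0 γ lam0 c0 V m b = (m' - m : ℝ) +
      γ * (lam0 * (V (m' + 1) 1 - V (m + 1) 1) +
        (1 - lam0) * (V (m' + 1) (b' + 1) - V (m + 1) (b + 1))) := by
  simp only [Q0]; ring

theorem Q1_sub_Q1 (γ lam1 c1 : ℝ) (V : ℕ → ℕ → ℝ) (m b m' b' : ℕ) :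
    Q1 γ lam1 c1 V m' b' - Q1 γ lam1 c1 V m b = (m' - m : ℝ) +
      γ * (lam1 * (V (b' + 1) (b' + 1) - V (b + 1) (b + 1)) +
        (1 - lam1) * (V (m' + 1) (b' + 1) - V (m + 1) (b + 1))) := by
  simp only [Q1]; ring

theorem Q2_sub_Q2 (γ lam2 c2 : ℝ) (V : ℕ → ℕ → ℝ) (m b m' b' : ℕ) :
    Q2 γ lam2 c2 V m' b' - Q2 γ lam2 c2 V m b = (m' - m : ℝ) +
      γ * (lam2 * (V (b' + 1) 1 - V (b + 1) 1) +
        (1 - lam2) * (V (m' + 1) (b' + 1) - V (m + 1) (b + 1))) := by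
  simp only [Q2]; ring

noncomputable def lowerSlope (γ lam1 : ℝ) : ℝ := (1 - γ * (1 - lam1))⁻¹

noncomputable def upperSlope (γ : ℝ) : ℝ := (1 - γ)⁻¹

structure Admissible (γ lam0 lam1 lam2 : ℝ) : Prop where
  discount_nonneg : 0 ≤ γ
  discount_lt_one : γ < 1
  lam2_pos : 0 < lam2
  lam2_le_lam0 : lam2 ≤ lam0
  lam0_le_lam1 : lam0 ≤ lam1
  lam1_le_one : lam1 ≤ 1

structure IsShaped (γ lam0 lam1 : ℝ) (V : ℕ → ℕ → ℝ) : Prop where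
  lowerSlope_le_step : ∀ m b, 1 ≤ b → b ≤ m → lowerSlope γ lam1 ≤ V (m + 1) b - V m b
  step_le_upperSlope : ∀ m b, 1 ≤ b → b ≤ m → V (m + 1) b - V m b ≤ upperSlope γ
  le_succ_right : ∀ m b, 1 ≤ b → b < m → V m b ≤ V m (b + 1)
  diag_step_le_upperSlope : ∀ m, 1 ≤ m → V (m + 1) (m + 1) - V m m ≤ upperSlope γ
  step_le_diag_step : ∀ m b, 1 ≤ b → b ≤ m → V (m + 1) b - V m b ≤ V (m + 1) (m + 1) - V m m
  mul_right_step_le : ∀ m b, 1 ≤ b → b < m →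
    (lam1 - lam0) * (V m (b + 1) - V m b) ≤ lam1 * (V (b + 1) (b + 1) - V b b)

section

variable {γ lam0 lam1 lam2 c0 c1 c2 ρ : ℝ} {V Vstar W : ℕ → ℕ → ℝ}

theorem Tbell_sub_le {m b m' b' : ℕ} {X : ℝ}
    (h₀ : Q0 γ lam0 c0 V m' b' - Q0 γ lam0 c0 V m b ≤ X)
    (h₁ : Q1 γ lam1 c1 V m' b' - Q1 γ lam1 c1 V m b ≤ X)
    (h₂ : Q2 γ lam2 c2 V m' b' - Q2 γ lam2 c2 V m b ≤ X) :
    Tbell γ lam0 lam1 lam2 c0 c1 c2 V m' b' - Tbell γ lam0 lam1 lam2 c0 c1 c2 V m b ≤ X :=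
  min3_sub_min3_le h₀ h₁ h₂

theorem le_Tbell_sub {m b m' b' : ℕ} {X : ℝ}
    (h₀ : X ≤ Q0 γ lam0 c0 V m' b' - Q0 γ lam0 c0 V m b)
    (h₁ : X ≤ Q1 γ lam1 c1 V m' b' - Q1 γ lam1 c1 V m b)
    (h₂ : X ≤ Q2 γ lam2 c2 V m' b' - Q2 γ lam2 c2 V m b) :
    X ≤ Tbell γ lam0 lam1 lam2 c0 c1 c2 V m' b' - Tbell γ lam0 lam1 lam2 c0 c1 c2 V m b :=
  le_min3_sub_min3 h₀ h₁ h₂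

theorem mul_Tbell_sub_le {m b m' b' : ℕ} {α X : ℝ} (hα : 0 ≤ α)
    (h₀ : α * (Q0 γ lam0 c0 V m' b' - Q0 γ lam0 c0 V m b) ≤ X)
    (h₁ : α * (Q1 γ lam1 c1 V m' b' - Q1 γ lam1 c1 V m b) ≤ X)
    (h₂ : α * (Q2 γ lam2 c2 V m' b' - Q2 γ lam2 c2 V m b) ≤ X) :
    α * (Tbell γ lam0 lam1 lam2 c0 c1 c2 V m' b' - Tbell γ lam0 lam1 lam2 c0 c1 c2 V m b) ≤ X := by
  simp only [Tbell, mul_sub, mul_min_of_nonneg _ _ hα] at *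
  exact min3_sub_min3_le h₀ h₁ h₂

namespace Admissible

theorem lowerSlope_denom_pos (hp : Admissible γ lam0 lam1 lam2) : 0 < 1 - γ * (1 - lam1) := by
  obtain ⟨hγ, hγ1, h2, h20, h01, h1⟩ := hp
  nlinarith

theorem lowerSlope_eq (hp : Admissible γ lam0 lam1 lam2) :
    lowerSlope γ lam1 = 1 + γ * (1 - lam1) * lowerSlope γ lam1 := by
  have := hp.lowerSlope_denom_pos
  unfold lowerSlope
  field_simp
  ring

theorem upperSlope_eq (hp : Admissible γ lam0 lam1 lam2) : upperSlope γ = 1 + γ * upperSlope γ := by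
  have := sub_pos.2 hp.discount_lt_one
  unfold upperSlope
  field_simp
  ring

theorem one_le_lowerSlope (hp : Admissible γ lam0 lam1 lam2) : 1 ≤ lowerSlope γ lam1 := by
  refine one_le_inv₀ hp.lowerSlope_denom_pos |>.2 ?_
  obtain ⟨hγ, hγ1, h2, h20, h01, h1⟩ := hp
  nlinarith

theorem lowerSlope_le_upperSlope (hp : Admissible γ lam0 lam1 lam2) :
    lowerSlope γ lam1 ≤ upperSlope γ := by
  obtain ⟨hγ, hγ1, h2, h20, h01, h1⟩ := hp
  exact inv_anti₀ (by linarith) (by nlinarith)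

theorem lam_mem_Icc (hp : Admissible γ lam0 lam1 lam2) :
    lam0 ∈ Icc (0 : ℝ) 1 ∧ lam1 ∈ Icc (0 : ℝ) 1 ∧ lam2 ∈ Icc (0 : ℝ) 1 := by
  obtain ⟨-, -, h2, h20, h01, h1⟩ := hp
  exact ⟨⟨by linarith, by linarith⟩, ⟨by linarith, h1⟩, ⟨h2.le, by linarith⟩⟩

theorem sub_mul_upperSlope_le (hp : Admissible γ lam0 lam1 lam2)
    (hA : γ * (lam0 * lam1 + lam2 * (1 - lam1)) ≤ lam2) :
    (lam0 - lam2) * upperSlope γ ≤ lam0 * lowerSlope γ lam1 := by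
  have hL := hp.lowerSlope_denom_pos
  obtain ⟨hγ, hγ1, h2, h20, h01, h1⟩ := hp
  rw [upperSlope, lowerSlope, ← div_eq_mul_inv, ← div_eq_mul_inv,
    div_le_div_iff₀ (by linarith) hL]
  linarith

theorem mul_sub_mul_upperSlope_le_one (hp : Admissible γ lam0 lam1 lam2)
    (hA : γ * (lam0 * lam1 + lam2 * (1 - lam1)) ≤ lam2) :
    γ * (lam0 - lam2) * upperSlope γ ≤ 1 := by
  obtain ⟨hγ, hγ1, h2, h20, h01, h1⟩ := hp
  rw [upperSlope, ← div_eq_mul_inv, div_le_one (by linarith)]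
  nlinarith [mul_nonneg hγ (mul_nonneg (sub_nonneg.2 (h20.trans h01)) (sub_nonneg.2 h20))]

end Admissible

theorem isShaped_lowerSlope_mul (hp : Admissible γ lam0 lam1 lam2) :
    IsShaped γ lam0 lam1 (fun m _ => lowerSlope γ lam1 * m) := by
  have hL := hp.one_le_lowerSlope
  have hLU := hp.lowerSlope_le_upperSlope
  have h1 : 0 ≤ lam1 := (hp.lam2_pos.le.trans hp.lam2_le_lam0).trans hp.lam0_le_lam1
  refine ⟨?_, ?_, ?_, ?_, ?_, ?_⟩ <;> intros <;> push_cast <;> nlinarith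

theorem abs_convexComb_sub_le {t x x' y y' M : ℝ} (ht : t ∈ Icc (0 : ℝ) 1) (hx : |x - x'| ≤ M)
    (hy : |y - y'| ≤ M) : |(t * x + (1 - t) * y) - (t * x' + (1 - t) * y')| ≤ M := by
  obtain ⟨ht0, ht1⟩ := ht
  calc |(t * x + (1 - t) * y) - (t * x' + (1 - t) * y')|
      = |t * (x - x') + (1 - t) * (y - y')| := by ring_nf
    _ ≤ t * |x - x'| + (1 - t) * |y - y'| := by
      refine (abs_add_le _ _).trans_eq ?_
      rw [abs_mul, abs_mul, abs_of_nonneg ht0, abs_of_nonneg (sub_nonneg.2 ht1)]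
    _ ≤ t * M + (1 - t) * M := by gcongr
    _ = M := by ring

theorem abs_Tbell_sub_Tbell_le (hγ : 0 ≤ γ) (h0 : lam0 ∈ Icc (0 : ℝ) 1)
    (h1 : lam1 ∈ Icc (0 : ℝ) 1) (h2 : lam2 ∈ Icc (0 : ℝ) 1) {V' : ℕ → ℕ → ℝ} {M : ℝ}
    {m b : ℕ} (hb : 1 ≤ b) (hbm : b ≤ m)
    (hM : ∀ k c, 1 ≤ c → c ≤ k → k ≤ m + 1 → |V k c - V' k c| ≤ M) :
    |Tbell γ lam0 lam1 lam2 c0 c1 c2 V m b - Tbell γ lam0 lam1 lam2 c0 c1 c2 V' m b| ≤ γ * M := by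
  have hQ : ∀ (t x x' y y' c : ℝ), t ∈ Icc (0 : ℝ) 1 → |x - x'| ≤ M → |y - y'| ≤ M →
      |(m + c + γ * (t * x + (1 - t) * y)) - (m + c + γ * (t * x' + (1 - t) * y'))| ≤ γ * M := by
    intro t x x' y y' c ht hx hy
    rw [add_sub_add_left_eq_sub, ← mul_sub, abs_mul, abs_of_nonneg hγ]
    exact mul_le_mul_of_nonneg_left (abs_convexComb_sub_le ht hx hy) hγ
  have hm1 := hM (m + 1) 1 le_rfl (by omega) le_rfl
  have hmb := hM (m + 1) (b + 1) (by omega) (by omega) le_rfl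
  have hbb := hM (b + 1) (b + 1) (by omega) le_rfl (by omega)
  have hb1 := hM (b + 1) 1 le_rfl (by omega) (by omega)
  refine (abs_min_sub_min_le_max _ _ _ _).trans <| max_le ?_ <|
    (abs_min_sub_min_le_max _ _ _ _).trans <| max_le ?_ ?_
  · exact hQ _ _ _ _ _ _ h0 hm1 hmb
  · exact hQ _ _ _ _ _ _ h1 hbb hmb
  · exact hQ _ _ _ _ _ _ h2 hb1 hmb

theorem abs_iterate_Tbell_sub_le (hγ : 0 ≤ γ) (h0 : lam0 ∈ Icc (0 : ℝ) 1)
    (h1 : lam1 ∈ Icc (0 : ℝ) 1) (h2 : lam2 ∈ Icc (0 : ℝ) 1) (hρ : 1 ≤ ρ)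
    (hfix : ∀ m b, 1 ≤ b → b ≤ m → Vstar m b = Tbell γ lam0 lam1 lam2 c0 c1 c2 Vstar m b)
    {K : ℝ} (hK : ∀ m b, 1 ≤ b → b ≤ m → |W m b - Vstar m b| ≤ K * ρ ^ m) (n : ℕ) :
    ∀ m b, 1 ≤ b → b ≤ m →
      |(Tbell γ lam0 lam1 lam2 c0 c1 c2)^[n] W m b - Vstar m b| ≤ K * (γ * ρ) ^ n * ρ ^ m := by
  have hK0 : 0 ≤ K := by
    have := (abs_nonneg _).trans (hK 1 1 le_rfl le_rfl)
    exact nonneg_of_mul_nonneg_left this (by positivity)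
  induction n with
  | zero => simpa using hK
  | succ n ih =>
    intro m b hb hbm
    rw [Function.iterate_succ_apply', hfix m b hb hbm]
    calc _ ≤ γ * (K * (γ * ρ) ^ n * ρ ^ (m + 1)) := by
          refine abs_Tbell_sub_Tbell_le hγ h0 h1 h2 hb hbm fun k c hc hck hkm => ?_
          exact (ih k c hc hck).trans (by gcongr)
      _ = K * (γ * ρ) ^ (n + 1) * ρ ^ m := by ring

theorem tendsto_iterate_Tbell (hγ : 0 ≤ γ) (h0 : lam0 ∈ Icc (0 : ℝ) 1)
    (h1 : lam1 ∈ Icc (0 : ℝ) 1) (h2 : lam2 ∈ Icc (0 : ℝ) 1) (hρ : 1 ≤ ρ) (hγρ : γ * ρ < 1)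
    (hfix : ∀ m b, 1 ≤ b → b ≤ m → Vstar m b = Tbell γ lam0 lam1 lam2 c0 c1 c2 Vstar m b)
    {K : ℝ} (hK : ∀ m b, 1 ≤ b → b ≤ m → |W m b - Vstar m b| ≤ K * ρ ^ m)
    {m b : ℕ} (hb : 1 ≤ b) (hbm : b ≤ m) :
    Tendsto (fun n => (Tbell γ lam0 lam1 lam2 c0 c1 c2)^[n] W m b) atTop (𝓝 (Vstar m b)) := by
  rw [tendsto_iff_norm_sub_tendsto_zero]
  refine squeeze_zero (fun _ => norm_nonneg _)
    (fun n => abs_iterate_Tbell_sub_le hγ h0 h1 h2 hρ hfix hK n m b hb hbm) ?_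
  simpa using ((tendsto_pow_atTop_nhds_zero_of_lt_one (by positivity) hγρ).const_mul K).mul_const
    (ρ ^ m)

namespace IsShaped

theorem lowerSlope_le_diag_step (hV : IsShaped γ lam0 lam1 V) {m : ℕ} (hm : 1 ≤ m) :
    lowerSlope γ lam1 ≤ V (m + 1) (m + 1) - V m m := by
  linarith [hV.lowerSlope_le_step m m hm le_rfl, hV.le_succ_right (m + 1) m hm (by omega)]

theorem le_right_of_le (hV : IsShaped γ lam0 lam1 V) {k c c' : ℕ} (hc : 1 ≤ c) (hcc' : c ≤ c')
    (hc'k : c' ≤ k) : V k c ≤ V k c' := by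
  induction c', hcc' using Nat.le_induction with
  | base => exact le_rfl
  | succ n hcn ih => exact (ih (by omega)).trans (hV.le_succ_right k n (by omega) (by omega))

theorem lowerSlope_le_Tbell_step (hp : Admissible γ lam0 lam1 lam2) (hV : IsShaped γ lam0 lam1 V)
    {m b : ℕ} (hb : 1 ≤ b) (hbm : b ≤ m) :
    lowerSlope γ lam1 ≤
      Tbell γ lam0 lam1 lam2 c0 c1 c2 V (m + 1) b - Tbell γ lam0 lam1 lam2 c0 c1 c2 V m b := by
  have hL := hp.lowerSlope_eq
  have hL0 := zero_le_one.trans hp.one_le_lowerSlope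
  obtain ⟨hγ, -, h2, h20, h01, h1⟩ := hp
  have hΔ₁ := hV.lowerSlope_le_step (m + 1) 1 le_rfl (by omega)
  have hΔ := hV.lowerSlope_le_step (m + 1) (b + 1) (by omega) (by omega)
  apply le_Tbell_sub
  · rw [Q0_sub_Q0]; push_cast
    linarith [mul_nonneg (mul_nonneg hγ (h2.le.trans h20)) (hL0.trans hΔ₁),
      mul_nonneg (mul_nonneg hγ (by linarith : (0:ℝ) ≤ 1 - lam0)) (sub_nonneg.2 hΔ),
      mul_nonneg (mul_nonneg hγ (sub_nonneg.2 h01)) hL0]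
  · rw [Q1_sub_Q1]; push_cast
    linarith [mul_nonneg (mul_nonneg hγ (sub_nonneg.2 h1)) (sub_nonneg.2 hΔ)]
  · rw [Q2_sub_Q2]; push_cast
    linarith [mul_nonneg (mul_nonneg hγ (by linarith : (0:ℝ) ≤ 1 - lam2)) (sub_nonneg.2 hΔ),
      mul_nonneg (mul_nonneg hγ (by linarith : (0:ℝ) ≤ lam1 - lam2)) hL0]

theorem Tbell_step_le_upperSlope (hp : Admissible γ lam0 lam1 lam2) (hV : IsShaped γ lam0 lam1 V)
    {m b : ℕ} (hb : 1 ≤ b) (hbm : b ≤ m) :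
    Tbell γ lam0 lam1 lam2 c0 c1 c2 V (m + 1) b - Tbell γ lam0 lam1 lam2 c0 c1 c2 V m b ≤
      upperSlope γ := by
  have hU := hp.upperSlope_eq
  have hL0 := zero_le_one.trans hp.one_le_lowerSlope
  have hLU := hp.lowerSlope_le_upperSlope
  obtain ⟨hγ, -, h2, h20, h01, h1⟩ := hp
  have hΔ₁ := hV.step_le_upperSlope (m + 1) 1 le_rfl (by omega)
  have hΔ := hV.step_le_upperSlope (m + 1) (b + 1) (by omega) (by omega)
  have hU0 := hL0.trans hLU
  apply Tbell_sub_le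
  · rw [Q0_sub_Q0]; push_cast
    linarith [mul_nonneg (mul_nonneg hγ (h2.le.trans h20)) (sub_nonneg.2 hΔ₁),
      mul_nonneg (mul_nonneg hγ (by linarith : (0:ℝ) ≤ 1 - lam0)) (sub_nonneg.2 hΔ)]
  · rw [Q1_sub_Q1]; push_cast
    linarith [mul_nonneg (mul_nonneg hγ (sub_nonneg.2 h1)) (sub_nonneg.2 hΔ),
      mul_nonneg (mul_nonneg hγ (by linarith : (0:ℝ) ≤ lam1)) hU0]
  · rw [Q2_sub_Q2]; push_cast
    linarith [mul_nonneg (mul_nonneg hγ (by linarith : (0:ℝ) ≤ 1 - lam2)) (sub_nonneg.2 hΔ),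
      mul_nonneg (mul_nonneg hγ h2.le) hU0]

theorem Tbell_le_succ_right (hp : Admissible γ lam0 lam1 lam2) (hV : IsShaped γ lam0 lam1 V)
    {m b : ℕ} (hb : 1 ≤ b) (hbm : b < m) :
    Tbell γ lam0 lam1 lam2 c0 c1 c2 V m b ≤ Tbell γ lam0 lam1 lam2 c0 c1 c2 V m (b + 1) := by
  have hL0 := zero_le_one.trans hp.one_le_lowerSlope
  obtain ⟨hγ, -, h2, h20, h01, h1⟩ := hp
  have hB := sub_nonneg.2 (hV.le_succ_right (m + 1) (b + 1) (by omega) (by omega))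
  have hE := hL0.trans (hV.lowerSlope_le_diag_step (m := b + 1) (by omega))
  have hG := hL0.trans (hV.lowerSlope_le_step (b + 1) 1 le_rfl (by omega))
  rw [← sub_nonneg]
  apply le_Tbell_sub
  · rw [Q0_sub_Q0]
    linarith [mul_nonneg (mul_nonneg hγ (by linarith : (0:ℝ) ≤ 1 - lam0)) hB]
  · rw [Q1_sub_Q1]
    linarith [mul_nonneg (mul_nonneg hγ (sub_nonneg.2 h1)) hB,
      mul_nonneg (mul_nonneg hγ (by linarith : (0:ℝ) ≤ lam1)) hE]
  · rw [Q2_sub_Q2]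
    linarith [mul_nonneg (mul_nonneg hγ (by linarith : (0:ℝ) ≤ 1 - lam2)) hB,
      mul_nonneg (mul_nonneg hγ h2.le) hG]

theorem Tbell_diag_step_le_upperSlope (hp : Admissible γ lam0 lam1 lam2)
    (hV : IsShaped γ lam0 lam1 V) {m : ℕ} (hm : 1 ≤ m) :
    Tbell γ lam0 lam1 lam2 c0 c1 c2 V (m + 1) (m + 1) - Tbell γ lam0 lam1 lam2 c0 c1 c2 V m m ≤
      upperSlope γ := by
  have hU := hp.upperSlope_eq
  have hL0 := zero_le_one.trans hp.one_le_lowerSlope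
  have hLU := hp.lowerSlope_le_upperSlope
  obtain ⟨hγ, -, h2, h20, h01, h1⟩ := hp
  have hΔ₁ := hV.step_le_upperSlope (m + 1) 1 le_rfl (by omega)
  have hE := hV.diag_step_le_upperSlope (m + 1) (by omega)
  have hE0 := hL0.trans (hV.lowerSlope_le_diag_step (m := m + 1) (by omega))
  apply Tbell_sub_le
  · rw [Q0_sub_Q0]; push_cast
    linarith [mul_nonneg (mul_nonneg hγ (h2.le.trans h20)) (sub_nonneg.2 hΔ₁),
      mul_nonneg (mul_nonneg hγ (by linarith : (0:ℝ) ≤ 1 - lam0)) (sub_nonneg.2 hE)]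
  · rw [Q1_sub_Q1]; push_cast
    linarith [mul_nonneg hγ (sub_nonneg.2 hE)]
  · rw [Q2_sub_Q2]; push_cast
    linarith [mul_nonneg (mul_nonneg hγ h2.le) (sub_nonneg.2 hΔ₁),
      mul_nonneg (mul_nonneg hγ (by linarith : (0:ℝ) ≤ 1 - lam2)) (sub_nonneg.2 hE)]

theorem Q0_diag_step_le_Tbell_diag_step (hp : Admissible γ lam0 lam1 lam2)
    (hV : IsShaped γ lam0 lam1 V) {m : ℕ} (hm : 1 ≤ m) :
    Q0 γ lam0 c0 V (m + 1) (m + 1) - Q0 γ lam0 c0 V m m ≤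
      Tbell γ lam0 lam1 lam2 c0 c1 c2 V (m + 1) (m + 1) -
        Tbell γ lam0 lam1 lam2 c0 c1 c2 V m m := by
  obtain ⟨hγ, -, h2, h20, h01, h1⟩ := hp
  have hΔ₁E := hV.step_le_diag_step (m + 1) 1 le_rfl (by omega)
  apply le_Tbell_sub le_rfl
  · rw [Q0_sub_Q0, Q1_sub_Q1]
    linarith [mul_nonneg (mul_nonneg hγ (h2.le.trans h20)) (sub_nonneg.2 hΔ₁E)]
  · rw [Q0_sub_Q0, Q2_sub_Q2]
    linarith [mul_nonneg (mul_nonneg hγ (sub_nonneg.2 h20)) (sub_nonneg.2 hΔ₁E)]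

theorem Tbell_step_le_diag_step (hp : Admissible γ lam0 lam1 lam2)
    (hA : γ * (lam0 * lam1 + lam2 * (1 - lam1)) ≤ lam2) (hV : IsShaped γ lam0 lam1 V)
    {m b : ℕ} (hb : 1 ≤ b) (hbm : b ≤ m) :
    Tbell γ lam0 lam1 lam2 c0 c1 c2 V (m + 1) b - Tbell γ lam0 lam1 lam2 c0 c1 c2 V m b ≤
      Tbell γ lam0 lam1 lam2 c0 c1 c2 V (m + 1) (m + 1) -
        Tbell γ lam0 lam1 lam2 c0 c1 c2 V m m := by
  -- Sensing has the smallest diagonal step, and that step dominates every action's step in `m`.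
  refine le_trans ?_ (hV.Q0_diag_step_le_Tbell_diag_step hp (by omega))
  have hkey := hp.sub_mul_upperSlope_le hA
  have hL0 := zero_le_one.trans hp.one_le_lowerSlope
  obtain ⟨hγ, -, h2, h20, h01, h1⟩ := hp
  have hΔ₁ := hV.lowerSlope_le_step (m + 1) 1 le_rfl (by omega)
  have hΔU := hV.step_le_upperSlope (m + 1) (b + 1) (by omega) (by omega)
  have hΔE := hV.step_le_diag_step (m + 1) (b + 1) (by omega) (by omega)
  have hΔ0 := hL0.trans (hV.lowerSlope_le_step (m + 1) (b + 1) (by omega) (by omega))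
  have hΔ₁0 := hL0.trans hΔ₁
  apply Tbell_sub_le
  · rw [Q0_sub_Q0, Q0_sub_Q0]; push_cast
    linarith [mul_nonneg (mul_nonneg hγ (by linarith : (0:ℝ) ≤ 1 - lam0)) (sub_nonneg.2 hΔE)]
  · rw [Q1_sub_Q1, Q0_sub_Q0]; push_cast
    linarith [mul_nonneg (mul_nonneg hγ (by linarith : (0:ℝ) ≤ 1 - lam0)) (sub_nonneg.2 hΔE),
      mul_nonneg (mul_nonneg hγ (sub_nonneg.2 h01)) hΔ0,
      mul_nonneg (mul_nonneg hγ (h2.le.trans h20)) hΔ₁0]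
  · rw [Q2_sub_Q2, Q0_sub_Q0]; push_cast
    linarith [mul_nonneg (mul_nonneg hγ (by linarith : (0:ℝ) ≤ 1 - lam0)) (sub_nonneg.2 hΔE),
      mul_nonneg (mul_nonneg hγ (sub_nonneg.2 h20)) (sub_nonneg.2 hΔU),
      mul_nonneg hγ (sub_nonneg.2 hkey),
      mul_nonneg (mul_nonneg hγ (h2.le.trans h20)) (sub_nonneg.2 hΔ₁)]

theorem Tbell_mul_right_step_le (hp : Admissible γ lam0 lam1 lam2)
    (hA : γ * (lam0 * lam1 + lam2 * (1 - lam1)) ≤ lam2) (hV : IsShaped γ lam0 lam1 V)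
    {m b : ℕ} (hb : 1 ≤ b) (hbm : b < m) :
    (lam1 - lam0) *
        (Tbell γ lam0 lam1 lam2 c0 c1 c2 V m (b + 1) - Tbell γ lam0 lam1 lam2 c0 c1 c2 V m b) ≤
      lam1 * (Tbell γ lam0 lam1 lam2 c0 c1 c2 V (b + 1) (b + 1) -
        Tbell γ lam0 lam1 lam2 c0 c1 c2 V b b) := by
  have hdiag := hV.Q0_diag_step_le_Tbell_diag_step hp (c0 := c0) (c1 := c1) (c2 := c2) hb
  have hkey := hp.mul_sub_mul_upperSlope_le_one hA
  have hL0 := zero_le_one.trans hp.one_le_lowerSlope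
  obtain ⟨hγ, -, h2, h20, h01, h1⟩ := hp
  have h0 : 0 ≤ lam0 := h2.le.trans h20
  have h1' : 0 ≤ lam1 := h0.trans h01
  refine le_trans ?_ (mul_le_mul_of_nonneg_left hdiag h1')
  have hJ := hV.mul_right_step_le (m + 1) (b + 1) (by omega) (by omega)
  have hG := hL0.trans (hV.lowerSlope_le_step (b + 1) 1 le_rfl (by omega))
  have hE := hV.diag_step_le_upperSlope (b + 1) (by omega)
  apply mul_Tbell_sub_le (sub_nonneg.2 h01)
  · rw [Q0_sub_Q0, Q0_sub_Q0]; push_cast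
    linarith [mul_nonneg (mul_nonneg (mul_nonneg hγ h1') h0) hG,
      mul_nonneg (mul_nonneg hγ (by linarith : (0:ℝ) ≤ 1 - lam0)) (sub_nonneg.2 hJ)]
  · rw [Q1_sub_Q1, Q0_sub_Q0]; push_cast
    linarith [mul_nonneg (mul_nonneg (mul_nonneg hγ h1') h0) hG,
      mul_nonneg (mul_nonneg hγ (sub_nonneg.2 h1)) (sub_nonneg.2 hJ)]
  · rw [Q2_sub_Q2, Q0_sub_Q0]; push_cast
    linarith [mul_nonneg (mul_nonneg hγ (by linarith : (0:ℝ) ≤ 1 - lam2)) (sub_nonneg.2 hJ),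
      mul_nonneg (mul_nonneg (mul_nonneg hγ h1') (sub_nonneg.2 h20)) hG,
      mul_nonneg (mul_nonneg (mul_nonneg hγ h0) h2.le) hG,
      mul_nonneg (mul_nonneg (mul_nonneg h1' hγ) (sub_nonneg.2 h20)) (sub_nonneg.2 hE),
      mul_nonneg h1' (sub_nonneg.2 hkey)]

theorem map_Tbell (hp : Admissible γ lam0 lam1 lam2)
    (hA : γ * (lam0 * lam1 + lam2 * (1 - lam1)) ≤ lam2) (hV : IsShaped γ lam0 lam1 V) :
    IsShaped γ lam0 lam1 (Tbell γ lam0 lam1 lam2 c0 c1 c2 V) where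
  lowerSlope_le_step _ _ hb hbm := hV.lowerSlope_le_Tbell_step hp hb hbm
  step_le_upperSlope _ _ hb hbm := hV.Tbell_step_le_upperSlope hp hb hbm
  le_succ_right _ _ hb hbm := hV.Tbell_le_succ_right hp hb hbm
  diag_step_le_upperSlope _ hm := hV.Tbell_diag_step_le_upperSlope hp hm
  step_le_diag_step _ _ hb hbm := hV.Tbell_step_le_diag_step hp hA hb hbm
  mul_right_step_le _ _ hb hbm := hV.Tbell_mul_right_step_le hp hA hb hbm

theorem of_tendsto {F : ℕ → ℕ → ℕ → ℝ} (hF : ∀ n, IsShaped γ lam0 lam1 (F n))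
    (hlim : ∀ m b, 1 ≤ b → b ≤ m → Tendsto (fun n => F n m b) atTop (𝓝 (V m b))) :
    IsShaped γ lam0 lam1 V where
  lowerSlope_le_step m b hb hbm :=
    ge_of_tendsto ((hlim (m + 1) b hb (by omega)).sub (hlim m b hb hbm))
      (.of_forall fun n => (hF n).lowerSlope_le_step m b hb hbm)
  step_le_upperSlope m b hb hbm :=
    le_of_tendsto ((hlim (m + 1) b hb (by omega)).sub (hlim m b hb hbm))
      (.of_forall fun n => (hF n).step_le_upperSlope m b hb hbm)
  le_succ_right m b hb hbm :=
    le_of_tendsto_of_tendsto' (hlim m b hb hbm.le) (hlim m (b + 1) (by omega) hbm)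
      fun n => (hF n).le_succ_right m b hb hbm
  diag_step_le_upperSlope m hm :=
    le_of_tendsto ((hlim (m + 1) (m + 1) (by omega) le_rfl).sub (hlim m m hm le_rfl))
      (.of_forall fun n => (hF n).diag_step_le_upperSlope m hm)
  step_le_diag_step m b hb hbm :=
    le_of_tendsto_of_tendsto' ((hlim (m + 1) b hb (by omega)).sub (hlim m b hb hbm))
      ((hlim (m + 1) (m + 1) (by omega) le_rfl).sub (hlim m m (hb.trans hbm) le_rfl))
      fun n => (hF n).step_le_diag_step m b hb hbm
  mul_right_step_le m b hb hbm :=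
    le_of_tendsto_of_tendsto'
      (((hlim m (b + 1) (by omega) hbm).sub (hlim m b hb hbm.le)).const_mul _)
      (((hlim (b + 1) (b + 1) (by omega) le_rfl).sub (hlim b b hb le_rfl)).const_mul _)
      fun n => (hF n).mul_right_step_le m b hb hbm

theorem of_eq_Tbell (hp : Admissible γ lam0 lam1 lam2)
    (hA : γ * (lam0 * lam1 + lam2 * (1 - lam1)) ≤ lam2)
    (hρ : 1 < ρ) (hγρ : γ * ρ < 1)
    (hnorm : ∃ C : ℝ, ∀ m b : ℕ, 1 ≤ b → b ≤ m → |Vstar m b| ≤ C * ρ ^ m)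
    (hfix : ∀ m b, 1 ≤ b → b ≤ m → Vstar m b = Tbell γ lam0 lam1 lam2 c0 c1 c2 Vstar m b) :
    IsShaped γ lam0 lam1 Vstar := by
  obtain ⟨C, hC⟩ := hnorm
  obtain ⟨h0, h1, h2⟩ := hp.lam_mem_Icc
  set L := lowerSlope γ lam1
  have hL0 : 0 ≤ L := zero_le_one.trans hp.one_le_lowerSlope
  have hK : ∀ m b, 1 ≤ b → b ≤ m → |L * m - Vstar m b| ≤ (L / (ρ - 1) + C) * ρ ^ m := by
    intro m b hb hbm
    have hm := one_add_mul_le_pow (show -2 ≤ ρ - 1 by linarith) m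
    rw [add_sub_cancel] at hm
    have hLm : |L * m| ≤ L / (ρ - 1) * ρ ^ m := by
      rw [abs_of_nonneg (by positivity), div_mul_eq_mul_div, le_div_iff₀ (by linarith)]
      nlinarith
    calc |L * m - Vstar m b| ≤ |L * m| + |Vstar m b| := abs_sub _ _
      _ ≤ L / (ρ - 1) * ρ ^ m + C * ρ ^ m := add_le_add hLm (hC m b hb hbm)
      _ = (L / (ρ - 1) + C) * ρ ^ m := by ring
  have hW : ∀ n, IsShaped γ lam0 lam1
      ((Tbell γ lam0 lam1 lam2 c0 c1 c2)^[n] fun m _ => L * m) := by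
    intro n
    induction n with
    | zero => exact isShaped_lowerSlope_mul hp
    | succ n ih => rw [Function.iterate_succ_apply']; exact ih.map_Tbell hp hA
  exact of_tendsto hW fun m b hb hbm =>
    tendsto_iterate_Tbell hp.discount_nonneg h0 h1 h2 hρ.le hγρ hfix hK hb hbm

theorem Q1_sub_Q0_succ_left_le (hp : Admissible γ lam0 lam1 lam2) (hV : IsShaped γ lam0 lam1 V)
    {m b : ℕ} (hb : 1 ≤ b) (hbm : b ≤ m) :
    Q1 γ lam1 c1 V (m + 1) b - Q0 γ lam0 c0 V (m + 1) b ≤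
      Q1 γ lam1 c1 V m b - Q0 γ lam0 c0 V m b := by
  have hL0 := zero_le_one.trans hp.one_le_lowerSlope
  obtain ⟨hγ, -, h2, h20, h01, -⟩ := hp
  have hΔ₁ := hL0.trans (hV.lowerSlope_le_step (m + 1) 1 le_rfl (by omega))
  have hΔ := hL0.trans (hV.lowerSlope_le_step (m + 1) (b + 1) (by omega) (by omega))
  linarith [Q0_sub_Q0 γ lam0 c0 V m b (m + 1) b,
    Q1_sub_Q1 γ lam1 c1 V m b (m + 1) b,
    mul_nonneg (mul_nonneg hγ (h2.le.trans h20)) hΔ₁,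
    mul_nonneg (mul_nonneg hγ (sub_nonneg.2 h01)) hΔ]

theorem Q2_sub_Q0_succ_left_le (hp : Admissible γ lam0 lam1 lam2)
    (hA : γ * (lam0 * lam1 + lam2 * (1 - lam1)) ≤ lam2) (hV : IsShaped γ lam0 lam1 V)
    {m b : ℕ} (hb : 1 ≤ b) (hbm : b ≤ m) :
    Q2 γ lam2 c2 V (m + 1) b - Q0 γ lam0 c0 V (m + 1) b ≤
      Q2 γ lam2 c2 V m b - Q0 γ lam0 c0 V m b := by
  have hkey := hp.sub_mul_upperSlope_le hA
  obtain ⟨hγ, -, h2, h20, h01, -⟩ := hp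
  have hΔ₁ := hV.lowerSlope_le_step (m + 1) 1 le_rfl (by omega)
  have hΔ := hV.step_le_upperSlope (m + 1) (b + 1) (by omega) (by omega)
  linarith [Q0_sub_Q0 γ lam0 c0 V m b (m + 1) b,
    Q2_sub_Q2 γ lam2 c2 V m b (m + 1) b,
    mul_nonneg (mul_nonneg hγ (h2.le.trans h20)) (sub_nonneg.2 hΔ₁),
    mul_nonneg (mul_nonneg hγ (sub_nonneg.2 h20)) (sub_nonneg.2 hΔ),
    mul_nonneg hγ (sub_nonneg.2 hkey)]

theorem Q1_sub_Q2_succ_left_le (hp : Admissible γ lam0 lam1 lam2) (hV : IsShaped γ lam0 lam1 V)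
    {m b : ℕ} (hb : 1 ≤ b) (hbm : b ≤ m) :
    Q1 γ lam1 c1 V (m + 1) b - Q2 γ lam2 c2 V (m + 1) b ≤
      Q1 γ lam1 c1 V m b - Q2 γ lam2 c2 V m b := by
  have hL0 := zero_le_one.trans hp.one_le_lowerSlope
  obtain ⟨hγ, -, -, h20, h01, -⟩ := hp
  have hΔ := hL0.trans (hV.lowerSlope_le_step (m + 1) (b + 1) (by omega) (by omega))
  linarith [Q2_sub_Q2 γ lam2 c2 V m b (m + 1) b,
    Q1_sub_Q1 γ lam1 c1 V m b (m + 1) b,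
    mul_nonneg (mul_nonneg hγ (sub_nonneg.2 (h20.trans h01))) hΔ]

theorem Q1_sub_Q0_le_succ_right (hp : Admissible γ lam0 lam1 lam2) (hV : IsShaped γ lam0 lam1 V)
    {m b : ℕ} (hb : 1 ≤ b) (hbm : b < m) :
    Q1 γ lam1 c1 V m b - Q0 γ lam0 c0 V m b ≤
      Q1 γ lam1 c1 V m (b + 1) - Q0 γ lam0 c0 V m (b + 1) := by
  have hJ := hV.mul_right_step_le (m + 1) (b + 1) (by omega) (by omega)
  linarith [Q0_sub_Q0 γ lam0 c0 V m b m (b + 1),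
    Q1_sub_Q1 γ lam1 c1 V m b m (b + 1),
    mul_nonneg hp.discount_nonneg (sub_nonneg.2 hJ)]

theorem Q2_sub_Q0_le_succ_right (hp : Admissible γ lam0 lam1 lam2) (hV : IsShaped γ lam0 lam1 V)
    {m b : ℕ} (hb : 1 ≤ b) (hbm : b < m) :
    Q2 γ lam2 c2 V m b - Q0 γ lam0 c0 V m b ≤
      Q2 γ lam2 c2 V m (b + 1) - Q0 γ lam0 c0 V m (b + 1) := by
  have hL0 := zero_le_one.trans hp.one_le_lowerSlope
  obtain ⟨hγ, -, h2, h20, -, -⟩ := hp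
  have hB := sub_nonneg.2 (hV.le_succ_right (m + 1) (b + 1) (by omega) (by omega))
  have hG := hL0.trans (hV.lowerSlope_le_step (b + 1) 1 le_rfl (by omega))
  linarith [Q0_sub_Q0 γ lam0 c0 V m b m (b + 1),
    Q2_sub_Q2 γ lam2 c2 V m b m (b + 1),
    mul_nonneg (mul_nonneg hγ h2.le) hG, mul_nonneg (mul_nonneg hγ (sub_nonneg.2 h20)) hB]

theorem Q0_le_Q1_diag (hp : Admissible γ lam0 lam1 lam2) (hV : IsShaped γ lam0 lam1 V)
    (hc : c0 ≤ c1) {b : ℕ} (hb : 1 ≤ b) : Q0 γ lam0 c0 V b b ≤ Q1 γ lam1 c1 V b b := by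
  obtain ⟨hγ, -, h2, h20, -, -⟩ := hp
  have hV1 := sub_nonneg.2 (hV.le_right_of_le le_rfl (by omega : 1 ≤ b + 1) le_rfl)
  simp only [Q0, Q1]
  linarith [mul_nonneg (mul_nonneg hγ (h2.le.trans h20)) hV1]

theorem Q0_le_Q2_diag (hp : Admissible γ lam0 lam1 lam2) (hV : IsShaped γ lam0 lam1 V)
    (hc : c0 ≤ c2) {b : ℕ} (hb : 1 ≤ b) : Q0 γ lam0 c0 V b b ≤ Q2 γ lam2 c2 V b b := by
  obtain ⟨hγ, -, -, h20, -, -⟩ := hp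
  have hV1 := sub_nonneg.2 (hV.le_right_of_le le_rfl (by omega : 1 ≤ b + 1) le_rfl)
  simp only [Q0, Q2]
  linarith [mul_nonneg (mul_nonneg hγ (sub_nonneg.2 h20)) hV1]

end IsShaped

theorem natCast_le_biSup_iff {s : Set ℕ} (hs : IsLowerSet s) (hne : s.Nonempty) {m : ℕ} :
    (m : ℕ∞) ≤ ⨆ n ∈ s, (n : ℕ∞) ↔ m ∈ s := by
  refine ⟨fun h => ?_, fun hm => le_iSup₂_of_le m hm le_rfl⟩
  by_contra hm
  have hlt : ∀ n ∈ s, n < m := fun n hn => lt_of_not_ge fun hmn => hm (hs hmn hn)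
  obtain ⟨k, hk⟩ := hne
  have hsup : ⨆ n ∈ s, (n : ℕ∞) ≤ ((m - 1 : ℕ) : ℕ∞) :=
    iSup₂_le fun n hn => Nat.cast_le.2 (Nat.le_sub_one_of_lt (hlt n hn))
  have : m ≤ m - 1 := by exact_mod_cast h.trans hsup
  have := hlt k hk
  omega

theorem exists_thresholds (P R : ℕ → ℕ → Prop)
    (hP : ∀ m n b, 1 ≤ b → b ≤ m → m ≤ n → P n b → P m b)
    (hR : ∀ m n b, 1 ≤ b → b ≤ m → m ≤ n → R n b → R m b)
    (hdiag : ∀ b, 1 ≤ b → P b b)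
    (hmono : ∀ n b b', 1 ≤ b → b ≤ b' → b' ≤ n → P n b → P n b') :
    ∃ τ1 τ2 : ℕ → ℕ∞,
      (∀ b : ℕ, 1 ≤ b → (b : ℕ∞) ≤ τ1 b ∧ τ1 b ≤ τ2 b) ∧
      (∀ b b' : ℕ, 1 ≤ b → b ≤ b' → τ1 b ≤ τ1 b') ∧
      ∀ m b : ℕ, 1 ≤ b → b ≤ m →
        ((m : ℕ∞) ≤ τ1 b ↔ P m b) ∧ ((m : ℕ∞) ≤ τ2 b ↔ P m b ∨ R m b) := by
  -- Vacuous below the diagonal, so that these are initial segments of `ℕ`.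
  let A b := {n | b ≤ n → P n b}
  let B b := {n | b ≤ n → P n b ∨ R n b}
  have hA : ∀ b, 1 ≤ b → IsLowerSet (A b) := fun b hb m n hnm hm hbn =>
    hP n m b hb hbn hnm (hm (hbn.trans hnm))
  have hB : ∀ b, 1 ≤ b → IsLowerSet (B b) := fun b hb m n hnm hm hbn =>
    (hm (hbn.trans hnm)).imp (hP n m b hb hbn hnm) (hR n m b hb hbn hnm)
  have h0A : ∀ b, 1 ≤ b → (A b).Nonempty := fun b hb => ⟨0, fun h => absurd h (by omega)⟩
  have h0B : ∀ b, 1 ≤ b → (B b).Nonempty := fun b hb => ⟨0, fun h => absurd h (by omega)⟩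
  refine ⟨fun b => ⨆ n ∈ A b, (n : ℕ∞), fun b => ⨆ n ∈ B b, (n : ℕ∞),
    fun b hb => ⟨?_, biSup_mono fun n hn hbn => .inl (hn hbn)⟩, fun b b' hb hbb' => ?_,
    fun m b hb hbm => ⟨?_, ?_⟩⟩
  · exact (natCast_le_biSup_iff (hA b hb) (h0A b hb)).2 fun _ => hdiag b hb
  · exact biSup_mono fun n hn hb'n => hmono n b b' hb hbb' hb'n (hn (hbb'.trans hb'n))
  · rw [natCast_le_biSup_iff (hA b hb) (h0A b hb)]
    exact ⟨fun h => h hbm, fun h _ => h⟩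
  · rw [natCast_le_biSup_iff (hB b hb) (h0B b hb)]
    exact ⟨fun h => h hbm, fun h _ => h⟩

theorem exists_ordered_thresholds (q0 q1 q2 : ℕ → ℕ → ℝ)
    (hdiag : ∀ b, 1 ≤ b → q0 b b ≤ q1 b b ∧ q0 b b ≤ q2 b b)
    (h10 : ∀ m b, 1 ≤ b → b ≤ m → q1 (m + 1) b - q0 (m + 1) b ≤ q1 m b - q0 m b)
    (h20 : ∀ m b, 1 ≤ b → b ≤ m → q2 (m + 1) b - q0 (m + 1) b ≤ q2 m b - q0 m b)
    (h12 : ∀ m b, 1 ≤ b → b ≤ m → q1 (m + 1) b - q2 (m + 1) b ≤ q1 m b - q2 m b)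
    (h10' : ∀ m b, 1 ≤ b → b < m → q1 m b - q0 m b ≤ q1 m (b + 1) - q0 m (b + 1))
    (h20' : ∀ m b, 1 ≤ b → b < m → q2 m b - q0 m b ≤ q2 m (b + 1) - q0 m (b + 1)) :
    ∃ τ1 τ2 : ℕ → ℕ∞,
      (∀ b : ℕ, 1 ≤ b → (b : ℕ∞) ≤ τ1 b ∧ τ1 b ≤ τ2 b) ∧
      (∀ b b' : ℕ, 1 ≤ b → b ≤ b' → τ1 b ≤ τ1 b') ∧
      (∀ m b : ℕ, 1 ≤ b → b ≤ m →
        ((m : ℕ∞) ≤ τ1 b → q0 m b ≤ q1 m b ∧ q0 m b ≤ q2 m b) ∧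
        (τ1 b < (m : ℕ∞) → (m : ℕ∞) ≤ τ2 b → q2 m b ≤ q0 m b ∧ q2 m b ≤ q1 m b) ∧
        (τ2 b < (m : ℕ∞) → q1 m b ≤ q0 m b ∧ q1 m b ≤ q2 m b)) := by
  have hanti : ∀ f : ℕ → ℕ → ℝ, (∀ m b, 1 ≤ b → b ≤ m → f (m + 1) b ≤ f m b) →
      ∀ m n b, 1 ≤ b → b ≤ m → m ≤ n → f n b ≤ f m b := fun f hf m n b hb hbm hmn =>
    antitoneOn_nat_Ici_of_succ_le (f := fun k => f k b) (fun k hk => hf k b hb hk) hbm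
      (hbm.trans hmn) hmn
  obtain ⟨τ1, τ2, hτ, hτ1, hiff⟩ := exists_thresholds
    (fun m b => q0 m b ≤ q1 m b ∧ q0 m b ≤ q2 m b) (fun m b => q2 m b ≤ q1 m b)
    (fun m n b hb hbm hmn h => by
      have := hanti (fun k b => q1 k b - q0 k b) h10 m n b hb hbm hmn
      have := hanti (fun k b => q2 k b - q0 k b) h20 m n b hb hbm hmn
      exact ⟨by linarith [h.1], by linarith [h.2]⟩)
    (fun m n b hb hbm hmn h => by
      linarith [hanti (fun k b => q1 k b - q2 k b) h12 m n b hb hbm hmn])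
    hdiag
    (fun n b b' hb hbb' hb'n h => by
      induction b', hbb' using Nat.le_induction with
      | base => exact h
      | succ k hbk ih =>
        obtain ⟨h1, h2⟩ := ih (by omega)
        have := h10' n k (by omega) (by omega)
        have := h20' n k (by omega) (by omega)
        exact ⟨by linarith, by linarith⟩)
  refine ⟨τ1, τ2, hτ, hτ1, fun m b hb hbm => ?_⟩
  obtain ⟨hm1, hm2⟩ := hiff m b hb hbm
  refine ⟨hm1.1, fun hlt hle => ?_, fun hlt => ?_⟩
  · have hsense := mt hm1.2 (not_le.2 hlt)
    have h21 := (hm2.1 hle).resolve_left hsense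
    refine ⟨le_of_not_gt fun h => hsense ⟨?_, h.le⟩, h21⟩
    linarith
  · have hsense := mt hm1.2 (not_le.2 ((hτ b hb).2.trans_lt hlt))
    have h12 : q1 m b < q2 m b := not_le.1 fun h => mt hm2.2 (not_le.2 hlt) (.inr h)
    refine ⟨le_of_not_gt fun h => hsense ⟨h.le, ?_⟩, h12.le⟩
    linarith

end

theorem ordered_threshold_structure_general
    (γ lam0 lam1 lam2 c0 c1 c2 ρ : ℝ)
    (hγ0 : 0 < γ) (hγ1 : γ < 1)
    (hl1 : 0 < lam1) (hl1' : lam1 < 1)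
    (hl2 : 0 < lam2)
    (hord1 : lam2 ≤ lam0) (hord2 : lam0 ≤ lam1)
    (hord3 : c0 ≤ c1) (hord4 : c1 ≤ c2)
    (hAss1 : γ ≤ lam2 / (lam0 * lam1 + lam2 * (1 - lam1)))
    (hρ1 : 1 < ρ) (hρ2 : ρ < 1 / γ)
    (Vstar : ℕ → ℕ → ℝ)
    (hnorm : ∃ C : ℝ, ∀ m b : ℕ, 1 ≤ b → b ≤ m → |Vstar m b| ≤ C * ρ ^ m)
    (hfix : ∀ m b : ℕ, 1 ≤ b → b ≤ m →
      Vstar m b = Tbell γ lam0 lam1 lam2 c0 c1 c2 Vstar m b) :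
    ∃ τ1 τ2 : ℕ → ℕ∞,
      (∀ b : ℕ, 1 ≤ b → (b : ℕ∞) ≤ τ1 b ∧ τ1 b ≤ τ2 b) ∧
      (∀ b b' : ℕ, 1 ≤ b → b ≤ b' → τ1 b ≤ τ1 b') ∧
      (∀ m b : ℕ, 1 ≤ b → b ≤ m →
        ((m : ℕ∞) ≤ τ1 b →
          Q0 γ lam0 c0 Vstar m b ≤ Q1 γ lam1 c1 Vstar m b ∧
          Q0 γ lam0 c0 Vstar m b ≤ Q2 γ lam2 c2 Vstar m b) ∧
        (τ1 b < (m : ℕ∞) → (m : ℕ∞) ≤ τ2 b →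
          Q2 γ lam2 c2 Vstar m b ≤ Q0 γ lam0 c0 Vstar m b ∧
          Q2 γ lam2 c2 Vstar m b ≤ Q1 γ lam1 c1 Vstar m b) ∧
        (τ2 b < (m : ℕ∞) →
          Q1 γ lam1 c1 Vstar m b ≤ Q0 γ lam0 c0 Vstar m b ∧
          Q1 γ lam1 c1 Vstar m b ≤ Q2 γ lam2 c2 Vstar m b)) := by
  have hp : Admissible γ lam0 lam1 lam2 := ⟨hγ0.le, hγ1, hl2, hord1, hord2, hl1'.le⟩
  have hA : γ * (lam0 * lam1 + lam2 * (1 - lam1)) ≤ lam2 := by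
    rwa [le_div_iff₀ (by nlinarith)] at hAss1
  have hγρ : γ * ρ < 1 := by rwa [lt_div_iff₀ hγ0, mul_comm] at hρ2
  have hV := IsShaped.of_eq_Tbell hp hA hρ1 hγρ hnorm hfix
  exact exists_ordered_thresholds _ _ _
    (fun b hb => ⟨hV.Q0_le_Q1_diag hp hord3 hb, hV.Q0_le_Q2_diag hp (hord3.trans hord4) hb⟩)
    (fun m b hb hbm => hV.Q1_sub_Q0_succ_left_le hp hb hbm)
    (fun m b hb hbm => hV.Q2_sub_Q0_succ_left_le hp hA hb hbm)
    (fun m b hb hbm => hV.Q1_sub_Q2_succ_left_le hp hb hbm)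
    (fun m b hb hbm => hV.Q1_sub_Q0_le_succ_right hp hb hbm)
    (fun m b hb hbm => hV.Q2_sub_Q0_le_succ_right hp hb hbm)

/-- The optimal stationary policy has an ordered two-threshold
structure: there are thresholds `τ1 ≤ τ2` (valued in `ℕ∞`), with `τ1` nondecreasing and
`b ≤ τ1 b`, such that sensing is optimal for `m ≤ τ1 b`, the joint action is optimal for
`τ1 b < m ≤ τ2 b`, and communication is optimal for `m > τ2 b`. -/
theorem ordered_threshold_structure
    (γ lam0 lam1 lam2 c0 c1 c2 ρ : ℝ)
    (hγ0 : 0 < γ) (hγ1 : γ < 1)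
    (hl0 : 0 < lam0) (hl0' : lam0 < 1)
    (hl1 : 0 < lam1) (hl1' : lam1 < 1)
    (hl2 : 0 < lam2) (hl2' : lam2 < 1)
    (hc0 : 0 ≤ c0) (hc1 : 0 ≤ c1) (hc2 : 0 ≤ c2)
    (hord1 : lam2 ≤ lam0) (hord2 : lam0 ≤ lam1)
    (hord3 : c0 ≤ c1) (hord4 : c1 ≤ c2)
    (hAss1 : γ ≤ lam2 / (lam0 * lam1 + lam2 * (1 - lam1)))
    (hρ1 : 1 < ρ) (hρ2 : ρ < 1 / γ)
    (Vstar : ℕ → ℕ → ℝ)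
    (hnorm : ∃ C : ℝ, ∀ m b : ℕ, 1 ≤ b → b ≤ m → |Vstar m b| ≤ C * ρ ^ m)
    (hfix : ∀ m b : ℕ, 1 ≤ b → b ≤ m →
      Vstar m b = Tbell γ lam0 lam1 lam2 c0 c1 c2 Vstar m b) :
    ∃ τ1 τ2 : ℕ → ℕ∞,
      (∀ b : ℕ, 1 ≤ b → (b : ℕ∞) ≤ τ1 b ∧ τ1 b ≤ τ2 b) ∧
      (∀ b b' : ℕ, 1 ≤ b → b ≤ b' → τ1 b ≤ τ1 b') ∧
      (∀ m b : ℕ, 1 ≤ b → b ≤ m →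
        ((m : ℕ∞) ≤ τ1 b →
          Q0 γ lam0 c0 Vstar m b ≤ Q1 γ lam1 c1 Vstar m b ∧
          Q0 γ lam0 c0 Vstar m b ≤ Q2 γ lam2 c2 Vstar m b) ∧
        (τ1 b < (m : ℕ∞) → (m : ℕ∞) ≤ τ2 b →
          Q2 γ lam2 c2 Vstar m b ≤ Q0 γ lam0 c0 Vstar m b ∧
          Q2 γ lam2 c2 Vstar m b ≤ Q1 γ lam1 c1 Vstar m b) ∧
        (τ2 b < (m : ℕ∞) →
          Q1 γ lam1 c1 Vstar m b ≤ Q0 γ lam0 c0 Vstar m b ∧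
          Q1 γ lam1 c1 Vstar m b ≤ Q2 γ lam2 c2 Vstar m b)) :=
  ordered_threshold_structure_general γ lam0 lam1 lam2 c0 c1 c2 ρ hγ0 hγ1 hl1 hl1' hl2 hord1 hord2
    hord3 hord4 hAss1 hρ1 hρ2 Vstar hnorm hfix
end

section
/- Let V★ be the optimal value function of the unbounded problem and let V_A be the unique fixed point of the truncated Bellman operator T_A on S_A. Then the truncation error at the initial state satisfies V★(1,1) − V_A(1,1) ≤ γ^A/(1−γ)². -/
/-- The truncated (clipped) Bellman operator `T_A` on the truncated state space
`S_A = {(m,b) : 1 ≤ b ≤ m ≤ A}`. -/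
noncomputable def TbellTrunc (γ lam0 lam1 lam2 c0 c1 c2 : ℝ) (A : ℕ)
    (V : ℕ → ℕ → ℝ) (m b : ℕ) : ℝ :=
  min ((m : ℝ) + c0 + γ * (lam0 * V (min (m + 1) A) 1 +
        (1 - lam0) * V (min (m + 1) A) (min (b + 1) A)))
    (min ((m : ℝ) + c1 + γ * (lam1 * V (min (b + 1) A) (min (b + 1) A) +
        (1 - lam1) * V (min (m + 1) A) (min (b + 1) A)))
      ((m : ℝ) + c2 + γ * (lam2 * V (min (b + 1) A) 1 +
        (1 - lam2) * V (min (m + 1) A) (min (b + 1) A))))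

open Set Filter Topology

lemma le_of_forall_le_add_mul_pow {x a K t : ℝ} (ht0 : 0 ≤ t) (ht1 : t < 1)
    (h : ∀ k : ℕ, x ≤ a + K * t ^ k) : x ≤ a := by
  have hlim : Tendsto (fun k : ℕ => a + K * t ^ k) atTop (𝓝 a) := by
    simpa using ((tendsto_pow_atTop_nhds_zero_of_lt_one ht0 ht1).const_mul K).const_add a
  exact ge_of_tendsto' hlim h

lemma min_sub_min_le {a b c d e : ℝ} (hac : a - c ≤ e) (hbd : b - d ≤ e) :
    min a b - min c d ≤ e := by
  rw [sub_le_iff_le_add', ← min_add_add_right]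
  exact min_le_min (by linarith) (by linarith)

section Bellman

variable {γ lam0 lam1 lam2 c0 c1 c2 : ℝ}

theorem Tbell_sub_Tbell_le (hγ : 0 ≤ γ)
    (hl0 : lam0 ∈ Icc (0 : ℝ) 1) (hl1 : lam1 ∈ Icc (0 : ℝ) 1) (hl2 : lam2 ∈ Icc (0 : ℝ) 1)
    {V W : ℕ → ℕ → ℝ} {m b m' b' : ℕ} {e : ℝ}
    (h0 : V (m + 1) 1 - W (m' + 1) 1 ≤ e)
    (h1 : V (b + 1) (b + 1) - W (b' + 1) (b' + 1) ≤ e)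
    (h2 : V (b + 1) 1 - W (b' + 1) 1 ≤ e)
    (hstay : V (m + 1) (b + 1) - W (m' + 1) (b' + 1) ≤ e) :
    Tbell γ lam0 lam1 lam2 c0 c1 c2 V m b - Tbell γ lam0 lam1 lam2 c0 c1 c2 W m' b'
      ≤ (m : ℝ) - m' + γ * e := by
  have action : ∀ {c l p q p' q' : ℝ}, l ∈ Icc (0 : ℝ) 1 → p - p' ≤ e → q - q' ≤ e →
      (m : ℝ) + c + γ * (l * p + (1 - l) * q) - ((m' : ℝ) + c + γ * (l * p' + (1 - l) * q'))
        ≤ (m : ℝ) - m' + γ * e := by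
    intro c l p q p' q' ⟨hl, hl'⟩ hp hq
    have hmix : l * p + (1 - l) * q - (l * p' + (1 - l) * q') ≤ e := by nlinarith
    linarith [mul_le_mul_of_nonneg_left hmix hγ]
  exact min_sub_min_le (action hl0 h0 hstay)
    (min_sub_min_le (action hl1 h1 hstay) (action hl2 h2 hstay))

end Bellman

section Shift

variable {γ lam0 lam1 lam2 c0 c1 c2 ρ : ℝ} {V : ℕ → ℕ → ℝ}

theorem Tbell_fixedPoint_succ_sub_le_step (hγ : γ ∈ Ico (0 : ℝ) 1)
    (hl0 : lam0 ∈ Icc (0 : ℝ) 1) (hl1 : lam1 ∈ Icc (0 : ℝ) 1) (hl2 : lam2 ∈ Icc (0 : ℝ) 1)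
    (hfix : ∀ m b : ℕ, 1 ≤ b → b ≤ m → V m b = Tbell γ lam0 lam1 lam2 c0 c1 c2 V m b)
    (hρ : 0 ≤ ρ) {δ : ℝ} (hδ : 0 ≤ δ)
    (h : ∀ m c : ℕ, 1 ≤ m → 1 ≤ c → c ≤ m + 1 →
      V (m + 1) c - V m (min c m) ≤ 1 / (1 - γ) + δ * ρ ^ m)
    {m c : ℕ} (hm : 1 ≤ m) (hc : 1 ≤ c) (hcm : c ≤ m + 1) :
    V (m + 1) c - V m (min c m) ≤ 1 / (1 - γ) + γ * ρ * δ * ρ ^ m := by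
  have hγ1 : 0 < 1 - γ := by linarith [hγ.2]
  set e := 1 / (1 - γ) + δ * ρ ^ (m + 1) with he
  have he0 : 0 ≤ e := by positivity
  have hsense : V (m + 1 + 1) 1 - V (m + 1) 1 ≤ e := by
    simpa only [min_eq_left (Nat.le_add_left 1 m)] using h (m + 1) 1 (by omega) le_rfl (by omega)
  have hstay : V (m + 1 + 1) (c + 1) - V (m + 1) (min c m + 1) ≤ e := by
    simpa only [min_add_add_right] using h (m + 1) (c + 1) (by omega) (by omega) (by omega)
  have hdiag : V (m + 1 + 1) (m + 1 + 1) - V (m + 1) (m + 1) ≤ e := by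
    simpa only [min_eq_right (Nat.le_succ (m + 1))] using
      h (m + 1) (m + 1 + 1) (by omega) (by omega) le_rfl
  -- for `c ≤ m` the two reset terms coincide; otherwise `c = m + 1` and they are one level apart
  have hreset : V (c + 1) (c + 1) - V (min c m + 1) (min c m + 1) ≤ e
      ∧ V (c + 1) 1 - V (min c m + 1) 1 ≤ e := by
    obtain hcb | ⟨rfl, hbm⟩ : min c m = c ∨ c = m + 1 ∧ min c m = m := by omega
    · rw [hcb, sub_self, sub_self]
      exact ⟨he0, he0⟩
    · rw [hbm]
      exact ⟨hdiag, hsense⟩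
  rw [hfix (m + 1) c hc hcm, hfix m (min c m) (by omega) (min_le_right _ _)]
  refine (Tbell_sub_Tbell_le hγ.1 hl0 hl1 hl2 hsense hreset.1 hreset.2 hstay).trans_eq ?_
  rw [he]
  push_cast
  field_simp
  ring

theorem Tbell_fixedPoint_succ_sub_le (hγ : γ ∈ Ico (0 : ℝ) 1)
    (hl0 : lam0 ∈ Icc (0 : ℝ) 1) (hl1 : lam1 ∈ Icc (0 : ℝ) 1) (hl2 : lam2 ∈ Icc (0 : ℝ) 1)
    (hfix : ∀ m b : ℕ, 1 ≤ b → b ≤ m → V m b = Tbell γ lam0 lam1 lam2 c0 c1 c2 V m b)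
    (hρ : 0 < ρ) (hγρ : γ * ρ < 1) {C : ℝ}
    (hC : ∀ m b : ℕ, 1 ≤ b → b ≤ m → |V m b| ≤ C * ρ ^ m)
    {m c : ℕ} (hm : 1 ≤ m) (hc : 1 ≤ c) (hcm : c ≤ m + 1) :
    V (m + 1) c - V m (min c m) ≤ 1 / (1 - γ) := by
  have hC0 : 0 ≤ C := by
    have := (abs_nonneg _).trans (hC 1 1 le_rfl le_rfl)
    rwa [pow_one, mul_nonneg_iff_of_pos_right hρ] at this
  have hγ1 : 0 < 1 - γ := by linarith [hγ.2]
  have hiter : ∀ k : ℕ, ∀ m c : ℕ, 1 ≤ m → 1 ≤ c → c ≤ m + 1 →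
      V (m + 1) c - V m (min c m) ≤ 1 / (1 - γ) + C * (1 + ρ) * (γ * ρ) ^ k * ρ ^ m := by
    intro k
    induction k with
    | zero =>
      intro m c hm hc hcm
      calc V (m + 1) c - V m (min c m) ≤ |V (m + 1) c| + |V m (min c m)| :=
            (le_abs_self _).trans (abs_sub _ _)
        _ ≤ C * ρ ^ (m + 1) + C * ρ ^ m :=
            add_le_add (hC _ _ hc hcm) (hC _ _ (by omega) (min_le_right _ _))
        _ = C * (1 + ρ) * (γ * ρ) ^ 0 * ρ ^ m := by ring
        _ ≤ _ := le_add_of_nonneg_left (by positivity)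
    | succ k ih =>
      intro m c hm hc hcm
      have hδ : 0 ≤ C * (1 + ρ) * (γ * ρ) ^ k := by
        have := mul_nonneg hγ.1 hρ.le
        positivity
      exact (Tbell_fixedPoint_succ_sub_le_step hγ hl0 hl1 hl2 hfix hρ.le hδ ih hm hc hcm).trans_eq
        (by ring)
  refine le_of_forall_le_add_mul_pow (mul_nonneg hγ.1 hρ.le) hγρ (K := C * (1 + ρ) * ρ ^ m) ?_
  exact fun k => (hiter k m c hm hc hcm).trans_eq (by ring)

end Shift

section Truncation

variable {γ lam0 lam1 lam2 c0 c1 c2 : ℝ} {A : ℕ}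

def clipExtend (A : ℕ) (V : ℕ → ℕ → ℝ) (m b : ℕ) : ℝ :=
  V (min m A) (min b A)

theorem TbellTrunc_eq_Tbell_clipExtend (hA : 1 ≤ A) (V : ℕ → ℕ → ℝ) (m b : ℕ) :
    TbellTrunc γ lam0 lam1 lam2 c0 c1 c2 A V m b
      = Tbell γ lam0 lam1 lam2 c0 c1 c2 (clipExtend A V) m b := by
  simp [TbellTrunc, Tbell, Q0, Q1, Q2, clipExtend, hA]

noncomputable def truncBound (γ : ℝ) (A j : ℕ) : ℝ :=
  γ ^ (A + 1 - j) / (1 - γ) ^ 2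

theorem truncBound_mono (hγ : γ ∈ Icc (0 : ℝ) 1) {j j' : ℕ} (hj : j ≤ j') :
    truncBound γ A j ≤ truncBound γ A j' :=
  div_le_div_of_nonneg_right (pow_le_pow_of_le_one hγ.1 hγ.2 (by omega)) (sq_nonneg _)

theorem mul_truncBound_succ {j : ℕ} (hj : j ≤ A) :
    γ * truncBound γ A (j + 1) = truncBound γ A j := by
  rw [truncBound, truncBound, show A + 1 - j = A + 1 - (j + 1) + 1 by omega, pow_succ]
  ring

theorem one_div_add_truncBound (hγ : γ ≠ 1) :
    1 / (1 - γ) + truncBound γ A A = truncBound γ A (A + 1) := by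
  have : 1 - γ ≠ 0 := sub_ne_zero.mpr hγ.symm
  simp only [truncBound, Nat.add_sub_cancel_left, Nat.sub_self, pow_one, pow_zero]
  field_simp
  ring

variable {Vstar VA : ℕ → ℕ → ℝ}

theorem sub_clipExtend_le_of_forall_le (hγ : γ ≠ 1) (hA : 1 ≤ A)
    (hshift : ∀ c : ℕ, 1 ≤ c → c ≤ A + 1 → Vstar (A + 1) c - Vstar A (min c A) ≤ 1 / (1 - γ))
    {δ : ℝ} (h : ∀ m b : ℕ, 1 ≤ b → b ≤ m → m ≤ A →
      Vstar m b - clipExtend A VA m b ≤ truncBound γ A m + δ)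
    {m b : ℕ} (hb : 1 ≤ b) (hbm : b ≤ m) (hm : m ≤ A + 1) :
    Vstar m b - clipExtend A VA m b ≤ truncBound γ A m + δ := by
  rcases hm.lt_or_eq with hlt | rfl
  · exact h m b hb hbm (by omega)
  have hclip : clipExtend A VA (A + 1) b = clipExtend A VA A (min b A) := by
    simp [clipExtend]
  have hlast := h A (min b A) (by omega) (min_le_right _ _) le_rfl
  rw [hclip, ← one_div_add_truncBound hγ]
  linarith [hshift b hb hbm]

theorem sub_clipExtend_le_step (hγ : γ ∈ Ico (0 : ℝ) 1)
    (hl0 : lam0 ∈ Icc (0 : ℝ) 1) (hl1 : lam1 ∈ Icc (0 : ℝ) 1) (hl2 : lam2 ∈ Icc (0 : ℝ) 1)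
    (hfix : ∀ m b : ℕ, 1 ≤ b → b ≤ m → Vstar m b = Tbell γ lam0 lam1 lam2 c0 c1 c2 Vstar m b)
    (hA : 1 ≤ A) (hfixA : ∀ m b : ℕ, 1 ≤ b → b ≤ m → m ≤ A →
      VA m b = TbellTrunc γ lam0 lam1 lam2 c0 c1 c2 A VA m b)
    (hshift : ∀ c : ℕ, 1 ≤ c → c ≤ A + 1 → Vstar (A + 1) c - Vstar A (min c A) ≤ 1 / (1 - γ))
    {δ : ℝ} (h : ∀ m b : ℕ, 1 ≤ b → b ≤ m → m ≤ A →
      Vstar m b - clipExtend A VA m b ≤ truncBound γ A m + δ)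
    {m b : ℕ} (hb : 1 ≤ b) (hbm : b ≤ m) (hm : m ≤ A) :
    Vstar m b - clipExtend A VA m b ≤ truncBound γ A m + γ * δ := by
  have hsucc : ∀ j c : ℕ, 1 ≤ c → c ≤ j → j ≤ m + 1 →
      Vstar j c - clipExtend A VA j c ≤ truncBound γ A (m + 1) + δ := fun j c hc hcj hj =>
    (sub_clipExtend_le_of_forall_le hγ.2.ne hA hshift h hc hcj (by omega)).trans
      (add_le_add_left (truncBound_mono ⟨hγ.1, hγ.2.le⟩ hj) δ)
  have hfixW : clipExtend A VA m b = Tbell γ lam0 lam1 lam2 c0 c1 c2 (clipExtend A VA) m b := by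
    rw [← TbellTrunc_eq_Tbell_clipExtend hA, ← hfixA m b hb hbm hm, clipExtend,
      min_eq_left hm, min_eq_left (hbm.trans hm)]
  rw [hfix m b hb hbm, hfixW]
  refine (Tbell_sub_Tbell_le hγ.1 hl0 hl1 hl2 (hsucc _ _ le_rfl (by omega) le_rfl)
    (hsucc _ _ (by omega) le_rfl (by omega)) (hsucc _ _ le_rfl (by omega) (by omega))
    (hsucc _ _ (by omega) (by omega) le_rfl)).trans_eq ?_
  rw [sub_self, zero_add, mul_add, mul_truncBound_succ hm]

theorem sub_clipExtend_le_truncBound (hγ : γ ∈ Ico (0 : ℝ) 1)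
    (hl0 : lam0 ∈ Icc (0 : ℝ) 1) (hl1 : lam1 ∈ Icc (0 : ℝ) 1) (hl2 : lam2 ∈ Icc (0 : ℝ) 1)
    (hfix : ∀ m b : ℕ, 1 ≤ b → b ≤ m → Vstar m b = Tbell γ lam0 lam1 lam2 c0 c1 c2 Vstar m b)
    (hA : 1 ≤ A) (hfixA : ∀ m b : ℕ, 1 ≤ b → b ≤ m → m ≤ A →
      VA m b = TbellTrunc γ lam0 lam1 lam2 c0 c1 c2 A VA m b)
    (hshift : ∀ c : ℕ, 1 ≤ c → c ≤ A + 1 → Vstar (A + 1) c - Vstar A (min c A) ≤ 1 / (1 - γ))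
    {m b : ℕ} (hb : 1 ≤ b) (hbm : b ≤ m) (hm : m ≤ A) :
    Vstar m b - clipExtend A VA m b ≤ truncBound γ A m := by
  obtain ⟨B, hB⟩ : BddAbove ((fun p : ℕ × ℕ => Vstar p.1 p.2 - clipExtend A VA p.1 p.2) ''
      (Iic A ×ˢ Iic A)) := (((finite_Iic A).prod (finite_Iic A)).image _).bddAbove
  have hiter : ∀ n : ℕ, ∀ m b : ℕ, 1 ≤ b → b ≤ m → m ≤ A →
      Vstar m b - clipExtend A VA m b ≤ truncBound γ A m + B * γ ^ n := by
    intro n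
    induction n with
    | zero =>
      intro m b hb hbm hm
      have hB' := hB ⟨(m, b), ⟨hm, hbm.trans hm⟩, rfl⟩
      have : 0 ≤ truncBound γ A m := div_nonneg (pow_nonneg hγ.1 _) (sq_nonneg _)
      rw [pow_zero, mul_one]
      linarith
    | succ n ih =>
      intro m b hb hbm hm
      exact (sub_clipExtend_le_step hγ hl0 hl1 hl2 hfix hA hfixA hshift ih hb hbm hm).trans_eq
        (by ring)
  exact le_of_forall_le_add_mul_pow hγ.1 hγ.2 fun n => hiter n m b hb hbm hm

end Truncation

theorem truncation_error_bound_general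
    (γ lam0 lam1 lam2 c0 c1 c2 ρ : ℝ)
    (hγ0 : 0 < γ) (hγ1 : γ < 1)
    (hl0 : 0 < lam0) (hl0' : lam0 < 1)
    (hl1 : 0 < lam1) (hl1' : lam1 < 1)
    (hl2 : 0 < lam2) (hl2' : lam2 < 1)
    (hρ1 : 1 < ρ) (hρ2 : ρ < 1 / γ)
    (Vstar : ℕ → ℕ → ℝ)
    (hnorm : ∃ C : ℝ, ∀ m b : ℕ, 1 ≤ b → b ≤ m → |Vstar m b| ≤ C * ρ ^ m)
    (hfix : ∀ m b : ℕ, 1 ≤ b → b ≤ m →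
      Vstar m b = Tbell γ lam0 lam1 lam2 c0 c1 c2 Vstar m b)
    (A : ℕ) (hA : 1 ≤ A)
    (VA : ℕ → ℕ → ℝ)
    (hfixA : ∀ m b : ℕ, 1 ≤ b → b ≤ m → m ≤ A →
      VA m b = TbellTrunc γ lam0 lam1 lam2 c0 c1 c2 A VA m b) :
    Vstar 1 1 - VA 1 1 ≤ γ ^ A / (1 - γ) ^ 2 := by
  obtain ⟨C, hC⟩ := hnorm
  have hγ : γ ∈ Ico (0 : ℝ) 1 := ⟨hγ0.le, hγ1⟩
  have hγρ : γ * ρ < 1 := by rwa [lt_div_iff₀ hγ0, mul_comm] at hρ2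
  have hlam0 : lam0 ∈ Icc (0 : ℝ) 1 := ⟨hl0.le, hl0'.le⟩
  have hlam1 : lam1 ∈ Icc (0 : ℝ) 1 := ⟨hl1.le, hl1'.le⟩
  have hlam2 : lam2 ∈ Icc (0 : ℝ) 1 := ⟨hl2.le, hl2'.le⟩
  have hshift : ∀ c : ℕ, 1 ≤ c → c ≤ A + 1 → Vstar (A + 1) c - Vstar A (min c A) ≤ 1 / (1 - γ) :=
    fun c hc hcA => Tbell_fixedPoint_succ_sub_le hγ hlam0 hlam1 hlam2 hfix (by linarith) hγρ hC
      hA hc hcA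
  simpa [clipExtend, truncBound, hA] using
    sub_clipExtend_le_truncBound hγ hlam0 hlam1 hlam2 hfix hA hfixA hshift le_rfl le_rfl hA

/-- If `V★` is the optimal value function of the unbounded problem and
`V_A` is the fixed point of the truncated Bellman operator `T_A`, then the truncation
error at the initial state `(1,1)` satisfies `V★(1,1) − V_A(1,1) ≤ γ^A/(1−γ)²`. -/
theorem truncation_error_bound
    (γ lam0 lam1 lam2 c0 c1 c2 ρ : ℝ)
    (hγ0 : 0 < γ) (hγ1 : γ < 1)
    (hl0 : 0 < lam0) (hl0' : lam0 < 1)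
    (hl1 : 0 < lam1) (hl1' : lam1 < 1)
    (hl2 : 0 < lam2) (hl2' : lam2 < 1)
    (hc0 : 0 ≤ c0) (hc1 : 0 ≤ c1) (hc2 : 0 ≤ c2)
    (hρ1 : 1 < ρ) (hρ2 : ρ < 1 / γ)
    (Vstar : ℕ → ℕ → ℝ)
    (hnorm : ∃ C : ℝ, ∀ m b : ℕ, 1 ≤ b → b ≤ m → |Vstar m b| ≤ C * ρ ^ m)
    (hfix : ∀ m b : ℕ, 1 ≤ b → b ≤ m →
      Vstar m b = Tbell γ lam0 lam1 lam2 c0 c1 c2 Vstar m b)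
    (A : ℕ) (hA : 1 ≤ A)
    (VA : ℕ → ℕ → ℝ)
    (hfixA : ∀ m b : ℕ, 1 ≤ b → b ≤ m → m ≤ A →
      VA m b = TbellTrunc γ lam0 lam1 lam2 c0 c1 c2 A VA m b) :
    Vstar 1 1 - VA 1 1 ≤ γ ^ A / (1 - γ) ^ 2 :=
  truncation_error_bound_general γ lam0 lam1 lam2 c0 c1 c2 ρ hγ0 hγ1 hl0 hl0' hl1 hl1' hl2 hl2' hρ1
    hρ2 Vstar hnorm hfix A hA VA hfixA
end

section
/- Assume λ2 ≤ λ0 ≤ λ1 and γ ≤ 1/(1 + λ1). Then the truncated relaxed single-arm problem is indexable: for all subsidies W ≤ W′, the passive sets satisfy P(W) ⊆ P(W′). -/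
/-!
Let `D = V(·,W) - V(·,W')`. The Bellman operator `T_W` is monotone, satisfies
`T_W (V + c) = T_W V + γ c`, and lies between `T_{W'}` and `T_{W'} + (W' - W)`; reading the
fixed-point equations at a minimiser and at a maximiser of `D` on the finite set `S_A` gives
`0 ≤ D ≤ (W' - W) / (1 - γ)`. Since `Δu3(s,W) = cu + W + γ λu (V(s'u) - V(s⁺))`,
`Δu3(s,W') - Δu3(s,W) ≥ (W' - W) - γ λu D(s'u) ≥ (W' - W) - (1 - γ) D(s'u) ≥ 0`,
using `γ λu ≤ γ λ1 ≤ 1 - γ`.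
-/

/-- Active action-value `Q0` (sensing) in the truncated relaxed single-arm problem. -/
noncomputable def QW0 (γ lam0 c0 : ℝ) (A : ℕ) (V : ℕ → ℕ → ℝ) (m b : ℕ) : ℝ :=
  (m : ℝ) + c0 + γ * (lam0 * V (min (m + 1) A) 1 +
    (1 - lam0) * V (min (m + 1) A) (min (b + 1) A))

/-- Active action-value `Q1` (communication) in the truncated relaxed problem. -/
noncomputable def QW1 (γ lam1 c1 : ℝ) (A : ℕ) (V : ℕ → ℕ → ℝ) (m b : ℕ) : ℝ :=
  (m : ℝ) + c1 + γ * (lam1 * V (min (b + 1) A) (min (b + 1) A) +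
    (1 - lam1) * V (min (m + 1) A) (min (b + 1) A))

/-- Active action-value `Q2` (joint) in the truncated relaxed problem. -/
noncomputable def QW2 (γ lam2 c2 : ℝ) (A : ℕ) (V : ℕ → ℕ → ℝ) (m b : ℕ) : ℝ :=
  (m : ℝ) + c2 + γ * (lam2 * V (min (b + 1) A) 1 +
    (1 - lam2) * V (min (m + 1) A) (min (b + 1) A))

/-- Idle action-value `Q3` with subsidy `W` in the truncated relaxed problem. -/
noncomputable def QW3 (γ W : ℝ) (A : ℕ) (V : ℕ → ℕ → ℝ) (m b : ℕ) : ℝ :=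
  (m : ℝ) - W + γ * V (min (m + 1) A) (min (b + 1) A)

/-- The relaxed Bellman operator `T_W` on the truncated state space `S_A`. -/
noncomputable def TW (γ lam0 lam1 lam2 c0 c1 c2 W : ℝ) (A : ℕ)
    (V : ℕ → ℕ → ℝ) (m b : ℕ) : ℝ :=
  min (QW0 γ lam0 c0 A V m b)
    (min (QW1 γ lam1 c1 A V m b)
      (min (QW2 γ lam2 c2 A V m b) (QW3 γ W A V m b)))

theorem Finset.nonneg_of_lowerBound_mul_le {α : Type*} {S : Finset α} {f : α → ℝ} {γ : ℝ}
    (hγ : γ < 1) (hf : ∀ lo, (∀ t ∈ S, lo ≤ f t) → ∀ s ∈ S, γ * lo ≤ f s) :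
    ∀ s ∈ S, 0 ≤ f s := by
  intro s hs
  obtain ⟨p, hp, hmin⟩ := S.exists_min_image f ⟨s, hs⟩
  have hp_fix : γ * f p ≤ f p := hf (f p) hmin p hp
  have hp_nonneg : 0 ≤ f p := by nlinarith
  exact hp_nonneg.trans (hmin s hs)

theorem Finset.one_sub_mul_le_of_le_add_mul_upperBound {α : Type*} {S : Finset α} {f : α → ℝ}
    {γ δ : ℝ} (hγ : γ ≤ 1) (hf : ∀ hi, (∀ t ∈ S, f t ≤ hi) → ∀ s ∈ S, f s ≤ δ + γ * hi) :
    ∀ s ∈ S, (1 - γ) * f s ≤ δ := by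
  intro s hs
  obtain ⟨p, hp, hmax⟩ := S.exists_max_image f ⟨s, hs⟩
  have hp_fix : f p ≤ δ + γ * f p := hf (f p) hmax p hp
  calc (1 - γ) * f s ≤ (1 - γ) * f p := mul_le_mul_of_nonneg_left (hmax s hs) (by linarith)
    _ ≤ δ := by linarith

def truncatedStates (A : ℕ) : Finset (ℕ × ℕ) :=
  {p ∈ Finset.Icc 1 A ×ˢ Finset.Icc 1 A | p.2 ≤ p.1}

theorem mem_truncatedStates {A : ℕ} {p : ℕ × ℕ} :
    p ∈ truncatedStates A ↔ 1 ≤ p.2 ∧ p.2 ≤ p.1 ∧ p.1 ≤ A := by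
  simp only [truncatedStates, Finset.mem_filter, Finset.mem_product, Finset.mem_Icc]
  omega

theorem successors_mem_truncatedStates {A m b : ℕ} (h : (m, b) ∈ truncatedStates A) :
    (min (m + 1) A, min (b + 1) A) ∈ truncatedStates A ∧
    (min (m + 1) A, 1) ∈ truncatedStates A ∧
    (min (b + 1) A, min (b + 1) A) ∈ truncatedStates A ∧
    (min (b + 1) A, 1) ∈ truncatedStates A := by
  simp only [mem_truncatedStates] at h ⊢
  omega

section Bellman

variable {γ lam0 lam1 lam2 c0 c1 c2 : ℝ} {A : ℕ}

local notation "𝒯" => TW γ lam0 lam1 lam2 c0 c1 c2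

theorem TW_mono (hγ : 0 ≤ γ) (hl0 : lam0 ∈ Set.Icc (0 : ℝ) 1)
    (hl1 : lam1 ∈ Set.Icc (0 : ℝ) 1) (hl2 : lam2 ∈ Set.Icc (0 : ℝ) 1)
    {W : ℝ} {V V' : ℕ → ℕ → ℝ} (hVV' : ∀ x y, (x, y) ∈ truncatedStates A → V x y ≤ V' x y)
    {m b : ℕ} (hs : (m, b) ∈ truncatedStates A) :
    𝒯 W A V m b ≤ 𝒯 W A V' m b := by
  obtain ⟨_, _, _, _⟩ := successors_mem_truncatedStates hs
  obtain ⟨_, hl0'⟩ := hl0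
  obtain ⟨_, hl1'⟩ := hl1
  obtain ⟨_, hl2'⟩ := hl2
  have := sub_nonneg.2 hl0'
  have := sub_nonneg.2 hl1'
  have := sub_nonneg.2 hl2'
  unfold TW QW0 QW1 QW2 QW3
  gcongr <;> apply hVV' <;> assumption

theorem TW_add_const {W c : ℝ} (V : ℕ → ℕ → ℝ) (m b : ℕ) :
    𝒯 W A (fun m b => V m b + c) m b = 𝒯 W A V m b + γ * c := by
  simp only [TW, QW0, QW1, QW2, QW3, ← min_add_add_right]
  ring_nf

theorem TW_antitone_subsidy {W W' : ℝ} (hW : W ≤ W') (V : ℕ → ℕ → ℝ) (m b : ℕ) :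
    𝒯 W' A V m b ≤ 𝒯 W A V m b := by
  unfold TW QW3
  gcongr

theorem TW_le_TW_add_sub {W W' : ℝ} (hW : W ≤ W') (V : ℕ → ℕ → ℝ) (m b : ℕ) :
    𝒯 W A V m b ≤ 𝒯 W' A V m b + (W' - W) := by
  have hd : 0 ≤ W' - W := sub_nonneg.2 hW
  simp only [TW, ← min_add_add_right]
  refine min_le_min (le_add_of_nonneg_right hd) (min_le_min (le_add_of_nonneg_right hd)
    (min_le_min (le_add_of_nonneg_right hd) (le_of_eq ?_)))
  unfold QW3
  ring

theorem QW0_sub_QW3 (W : ℝ) (V : ℕ → ℕ → ℝ) (m b : ℕ) :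
    QW0 γ lam0 c0 A V m b - QW3 γ W A V m b =
      c0 + W + γ * lam0 * (V (min (m + 1) A) 1 - V (min (m + 1) A) (min (b + 1) A)) := by
  unfold QW0 QW3
  ring

theorem QW1_sub_QW3 (W : ℝ) (V : ℕ → ℕ → ℝ) (m b : ℕ) :
    QW1 γ lam1 c1 A V m b - QW3 γ W A V m b =
      c1 + W + γ * lam1 *
        (V (min (b + 1) A) (min (b + 1) A) - V (min (m + 1) A) (min (b + 1) A)) := by
  unfold QW1 QW3
  ring

theorem QW2_sub_QW3 (W : ℝ) (V : ℕ → ℕ → ℝ) (m b : ℕ) :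
    QW2 γ lam2 c2 A V m b - QW3 γ W A V m b =
      c2 + W + γ * lam2 * (V (min (b + 1) A) 1 - V (min (m + 1) A) (min (b + 1) A)) := by
  unfold QW2 QW3
  ring

theorem fixedPoint_antitone_subsidy (hγ0 : 0 ≤ γ) (hγ1 : γ < 1) (hl0 : lam0 ∈ Set.Icc (0 : ℝ) 1)
    (hl1 : lam1 ∈ Set.Icc (0 : ℝ) 1) (hl2 : lam2 ∈ Set.Icc (0 : ℝ) 1)
    {W W' : ℝ} (hW : W ≤ W') {V V' : ℕ → ℕ → ℝ}
    (hV : ∀ m b : ℕ, 1 ≤ b → b ≤ m → m ≤ A → V m b = 𝒯 W A V m b)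
    (hV' : ∀ m b : ℕ, 1 ≤ b → b ≤ m → m ≤ A → V' m b = 𝒯 W' A V' m b) :
    ∀ p ∈ truncatedStates A, 0 ≤ V p.1 p.2 - V' p.1 p.2 := by
  refine Finset.nonneg_of_lowerBound_mul_le hγ1 fun lo hlo ⟨m, b⟩ hs => ?_
  have hle : ∀ x y, (x, y) ∈ truncatedStates A → V' x y + lo ≤ V x y :=
    fun x y h => by linarith [hlo (x, y) h]
  have hmono : 𝒯 W A (fun x y => V' x y + lo) m b ≤ 𝒯 W A V m b :=
    TW_mono hγ0 hl0 hl1 hl2 hle hs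
  have hsub : 𝒯 W' A V' m b ≤ 𝒯 W A V' m b := TW_antitone_subsidy hW V' m b
  rw [TW_add_const] at hmono
  obtain ⟨hb, hbm, hmA⟩ := mem_truncatedStates.1 hs
  rw [hV m b hb hbm hmA, hV' m b hb hbm hmA]
  linarith

theorem fixedPoint_sub_le (hγ0 : 0 ≤ γ) (hγ1 : γ ≤ 1) (hl0 : lam0 ∈ Set.Icc (0 : ℝ) 1)
    (hl1 : lam1 ∈ Set.Icc (0 : ℝ) 1) (hl2 : lam2 ∈ Set.Icc (0 : ℝ) 1)
    {W W' : ℝ} (hW : W ≤ W') {V V' : ℕ → ℕ → ℝ}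
    (hV : ∀ m b : ℕ, 1 ≤ b → b ≤ m → m ≤ A → V m b = 𝒯 W A V m b)
    (hV' : ∀ m b : ℕ, 1 ≤ b → b ≤ m → m ≤ A → V' m b = 𝒯 W' A V' m b) :
    ∀ p ∈ truncatedStates A, (1 - γ) * (V p.1 p.2 - V' p.1 p.2) ≤ W' - W := by
  refine Finset.one_sub_mul_le_of_le_add_mul_upperBound hγ1 fun hi hhi ⟨m, b⟩ hs => ?_
  have hle : ∀ x y, (x, y) ∈ truncatedStates A → V x y ≤ V' x y + hi :=
    fun x y h => by linarith [hhi (x, y) h]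
  have hmono : 𝒯 W A V m b ≤ 𝒯 W A (fun x y => V' x y + hi) m b :=
    TW_mono hγ0 hl0 hl1 hl2 hle hs
  have hsub : 𝒯 W A V' m b ≤ 𝒯 W' A V' m b + (W' - W) := TW_le_TW_add_sub hW V' m b
  rw [TW_add_const] at hmono
  obtain ⟨hb, hbm, hmA⟩ := mem_truncatedStates.1 hs
  rw [hV m b hb hbm hmA, hV' m b hb hbm hmA]
  linarith

end Bellman

theorem active_idle_difference_mono {γ lam c W W' x y x' y' : ℝ} (hγ : 0 ≤ γ) (hlam : 0 ≤ lam)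
    (hγlam : γ * lam ≤ 1 - γ) (hx : 0 ≤ x - x') (hx' : (1 - γ) * (x - x') ≤ W' - W)
    (hy : 0 ≤ y - y') (h : 0 ≤ c + W + γ * lam * (x - y)) :
    0 ≤ c + W' + γ * lam * (x' - y') := by
  nlinarith [mul_le_mul_of_nonneg_right hγlam hx, mul_nonneg (mul_nonneg hγ hlam) hy]

theorem relaxed_problem_indexable_general
    (γ lam0 lam1 lam2 c0 c1 c2 : ℝ)
    (hγ0 : 0 < γ) (hγ1 : γ < 1)
    (hl0 : 0 < lam0) (hl0' : lam0 < 1)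
    (hl1 : 0 < lam1) (hl1' : lam1 < 1)
    (hl2 : 0 < lam2) (hl2' : lam2 < 1)
    (hord1 : lam2 ≤ lam0) (hord2 : lam0 ≤ lam1)
    (hγ : γ ≤ 1 / (1 + lam1))
    (A : ℕ)
    (VW : ℝ → ℕ → ℕ → ℝ)
    (hfix : ∀ W : ℝ, ∀ m b : ℕ, 1 ≤ b → b ≤ m → m ≤ A →
      VW W m b = TW γ lam0 lam1 lam2 c0 c1 c2 W A (VW W) m b) :
    ∀ W W' : ℝ, W ≤ W' → ∀ m b : ℕ, 1 ≤ b → b ≤ m → m ≤ A →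
      (QW0 γ lam0 c0 A (VW W) m b - QW3 γ W A (VW W) m b ≥ 0 ∧
       QW1 γ lam1 c1 A (VW W) m b - QW3 γ W A (VW W) m b ≥ 0 ∧
       QW2 γ lam2 c2 A (VW W) m b - QW3 γ W A (VW W) m b ≥ 0) →
      (QW0 γ lam0 c0 A (VW W') m b - QW3 γ W' A (VW W') m b ≥ 0 ∧
       QW1 γ lam1 c1 A (VW W') m b - QW3 γ W' A (VW W') m b ≥ 0 ∧
       QW2 γ lam2 c2 A (VW W') m b - QW3 γ W' A (VW W') m b ≥ 0) := by
  rintro W W' hW m b hb hbm hmA ⟨h0, h1, h2⟩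
  have hγlam1 : γ * lam1 ≤ 1 - γ := by
    rw [le_div_iff₀ (by linarith)] at hγ
    linarith
  have hIcc : ∀ lam : ℝ, 0 < lam → lam < 1 → lam ∈ Set.Icc (0 : ℝ) 1 :=
    fun _ h h' => ⟨h.le, h'.le⟩
  have hlo := fixedPoint_antitone_subsidy hγ0.le hγ1 (hIcc _ hl0 hl0') (hIcc _ hl1 hl1')
    (hIcc _ hl2 hl2') hW (hfix W) (hfix W')
  have hhi := fixedPoint_sub_le hγ0.le hγ1.le (hIcc _ hl0 hl0') (hIcc _ hl1 hl1')
    (hIcc _ hl2 hl2') hW (hfix W) (hfix W')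
  obtain ⟨hplus, hs0, hs1, hs2⟩ :=
    successors_mem_truncatedStates (mem_truncatedStates.2 ⟨hb, hbm, hmA⟩)
  have hγlam : ∀ lam ≤ lam1, γ * lam ≤ 1 - γ :=
    fun _ hlam => (mul_le_mul_of_nonneg_left hlam hγ0.le).trans hγlam1
  simp only [QW0_sub_QW3, QW1_sub_QW3, QW2_sub_QW3] at h0 h1 h2 ⊢
  exact ⟨active_idle_difference_mono hγ0.le hl0.le (hγlam _ hord2)
      (hlo _ hs0) (hhi _ hs0) (hlo _ hplus) h0,
    active_idle_difference_mono hγ0.le hl1.le (hγlam _ le_rfl)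
      (hlo _ hs1) (hhi _ hs1) (hlo _ hplus) h1,
    active_idle_difference_mono hγ0.le hl2.le (hγlam _ (hord1.trans hord2))
      (hlo _ hs2) (hhi _ hs2) (hlo _ hplus) h2⟩

/-- If `λ2 ≤ λ0 ≤ λ1` and `γ ≤ 1/(1+λ1)`, the truncated relaxed
single-arm problem is indexable: for subsidies `W ≤ W'`, the passive sets satisfy
`P(W) ⊆ P(W')`, where `P(W)` is the set of states where the idle action is optimal,
i.e. where all three active-idle differences `Δu3(·,W)` are nonnegative. -/
theorem relaxed_problem_indexable
    (γ lam0 lam1 lam2 c0 c1 c2 : ℝ)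
    (hγ0 : 0 < γ) (hγ1 : γ < 1)
    (hl0 : 0 < lam0) (hl0' : lam0 < 1)
    (hl1 : 0 < lam1) (hl1' : lam1 < 1)
    (hl2 : 0 < lam2) (hl2' : lam2 < 1)
    (hc0 : 0 ≤ c0) (hc1 : 0 ≤ c1) (hc2 : 0 ≤ c2)
    (hord1 : lam2 ≤ lam0) (hord2 : lam0 ≤ lam1)
    (hγ : γ ≤ 1 / (1 + lam1))
    (A : ℕ) (hA : 1 ≤ A)
    (VW : ℝ → ℕ → ℕ → ℝ)
    (hfix : ∀ W : ℝ, ∀ m b : ℕ, 1 ≤ b → b ≤ m → m ≤ A →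
      VW W m b = TW γ lam0 lam1 lam2 c0 c1 c2 W A (VW W) m b) :
    ∀ W W' : ℝ, W ≤ W' → ∀ m b : ℕ, 1 ≤ b → b ≤ m → m ≤ A →
      (QW0 γ lam0 c0 A (VW W) m b - QW3 γ W A (VW W) m b ≥ 0 ∧
       QW1 γ lam1 c1 A (VW W) m b - QW3 γ W A (VW W) m b ≥ 0 ∧
       QW2 γ lam2 c2 A (VW W) m b - QW3 γ W A (VW W) m b ≥ 0) →
      (QW0 γ lam0 c0 A (VW W') m b - QW3 γ W' A (VW W') m b ≥ 0 ∧
       QW1 γ lam1 c1 A (VW W') m b - QW3 γ W' A (VW W') m b ≥ 0 ∧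
       QW2 γ lam2 c2 A (VW W') m b - QW3 γ W' A (VW W') m b ≥ 0) :=
  relaxed_problem_indexable_general γ lam0 lam1 lam2 c0 c1 c2 hγ0 hγ1 hl0 hl0' hl1 hl1' hl2 hl2'
    hord1 hord2 hγ A VW hfix
end

section
/- Let b < A be natural numbers, let f be a real-valued function on the integers {b, b+1, …, A}, and let H ≥ 0 satisfy |f(a+2) − 2·f(a+1) + f(a)| ≤ H for all a with b ≤ a ≤ A−2. Define the linear interpolant L(a) = f(b) + ((a−b)/(A−b))·(f(A) − f(b)). Then for every a with b ≤ a ≤ A, the interpolation error satisfies |L(a) − f(a)| ≤ (H/2)·(a−b)·(A−a). -/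
/-!
The error `w = L - f` of the linear interpolant vanishes at `b` and `A`, and its second differences
are those of `-f`, hence bounded by `H` in absolute value. The quadratic `q a = H/2 (a-b)(A-a)` also
vanishes at the endpoints and has second difference exactly `-H`, so `q - w` and `q + w` are
discretely concave with zero boundary values. By the discrete minimum principle both are
nonnegative on `{b, …, A}`, that is `|w| ≤ q`.
-/

def secondDiff (u : ℕ → ℝ) (a : ℕ) : ℝ :=
  u (a + 2) - 2 * u (a + 1) + u a

lemma secondDiff_sub (u v : ℕ → ℝ) (a : ℕ) :
    secondDiff (fun n => u n - v n) a = secondDiff u a - secondDiff v a := by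
  simp only [secondDiff]; ring

lemma secondDiff_add (u v : ℕ → ℝ) (a : ℕ) :
    secondDiff (fun n => u n + v n) a = secondDiff u a + secondDiff v a := by
  simp only [secondDiff]; ring

lemma secondDiff_affine (c m x₀ : ℝ) (a : ℕ) :
    secondDiff (fun n => c + ((n : ℝ) - x₀) * m) a = 0 := by
  simp only [secondDiff]; push_cast; ring

lemma secondDiff_quadratic (H x₀ x₁ : ℝ) (a : ℕ) :
    secondDiff (fun n => H / 2 * ((n : ℝ) - x₀) * (x₁ - n)) a = -H := by
  simp only [secondDiff]; push_cast; ring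

lemma nonneg_of_secondDiff_nonpos {u : ℕ → ℝ} {b A : ℕ} (hub : 0 ≤ u b) (huA : 0 ≤ u A)
    (hconc : ∀ a, b ≤ a → a + 2 ≤ A → secondDiff u a ≤ 0) {a : ℕ} (hba : b ≤ a) (haA : a ≤ A) :
    0 ≤ u a := by
  classical
  have hmin : ∃ m, m ∈ Finset.Icc b A ∧ ∀ x ∈ Finset.Icc b A, u m ≤ u x :=
    Finset.exists_min_image _ u ⟨a, Finset.mem_Icc.2 ⟨hba, haA⟩⟩
  -- the leftmost minimiser is strictly below its left neighbour, contradicting concavity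
  obtain ⟨m, ⟨hm, hm_le⟩, hleftmost⟩ : ∃ m, (m ∈ Finset.Icc b A ∧ ∀ x ∈ Finset.Icc b A, u m ≤ u x)
      ∧ ∀ j < m, ¬ (j ∈ Finset.Icc b A ∧ ∀ x ∈ Finset.Icc b A, u j ≤ u x) :=
    ⟨Nat.find hmin, Nat.find_spec hmin, fun j => Nat.find_min hmin⟩
  rw [Finset.mem_Icc] at hm
  refine le_trans ?_ (hm_le a (Finset.mem_Icc.2 ⟨hba, haA⟩))
  by_contra! hneg
  have hbm : b ≠ m := fun h => by rw [← h] at hneg; linarith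
  have hmA : m ≠ A := fun h => by rw [h] at hneg; linarith
  obtain ⟨k, rfl⟩ : ∃ k, m = k + 1 := ⟨m - 1, by omega⟩
  have hleft : u (k + 1) < u k := by
    by_contra! h
    exact hleftmost k (Nat.lt_succ_self k)
      ⟨Finset.mem_Icc.2 ⟨by omega, by omega⟩, fun x hx => h.trans (hm_le x hx)⟩
  have hright : u (k + 1) ≤ u (k + 2) := hm_le _ (Finset.mem_Icc.2 ⟨by omega, by omega⟩)
  have := hconc k (by omega) (by omega)
  simp only [secondDiff] at this
  linarith

lemma abs_le_of_abs_secondDiff_le {w : ℕ → ℝ} {b A : ℕ} {H : ℝ} (hwb : w b = 0) (hwA : w A = 0)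
    (hw : ∀ a, b ≤ a → a + 2 ≤ A → |secondDiff w a| ≤ H) {a : ℕ} (hba : b ≤ a) (haA : a ≤ A) :
    |w a| ≤ H / 2 * ((a : ℝ) - b) * ((A : ℝ) - a) := by
  let q : ℕ → ℝ := fun n => H / 2 * ((n : ℝ) - b) * ((A : ℝ) - n)
  have hlower : 0 ≤ q a - w a := by
    refine nonneg_of_secondDiff_nonpos (u := fun n => q n - w n) (by simp [q, hwb])
      (by simp [q, hwA]) (fun n hbn hnA => ?_) hba haA
    rw [secondDiff_sub, secondDiff_quadratic]
    linarith [(abs_le.1 (hw n hbn hnA)).1]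
  have hupper : 0 ≤ q a + w a := by
    refine nonneg_of_secondDiff_nonpos (u := fun n => q n + w n) (by simp [q, hwb])
      (by simp [q, hwA]) (fun n hbn hnA => ?_) hba haA
    rw [secondDiff_add, secondDiff_quadratic]
    linarith [(abs_le.1 (hw n hbn hnA)).2]
  exact abs_le.2 ⟨by simp only [q] at hupper; linarith, by simp only [q] at hlower; linarith⟩

theorem linear_interpolation_error_general
    (b A : ℕ) (hbA : b < A) (f : ℕ → ℝ) (H : ℝ)
    (hsecond : ∀ a : ℕ, b ≤ a → a + 2 ≤ A →
      |f (a + 2) - 2 * f (a + 1) + f a| ≤ H) :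
    ∀ a : ℕ, b ≤ a → a ≤ A →
      |f b + (((a : ℝ) - (b : ℝ)) / ((A : ℝ) - (b : ℝ))) * (f A - f b) - f a| ≤
        H / 2 * ((a : ℝ) - (b : ℝ)) * ((A : ℝ) - (a : ℝ)) := by
  intro a hba haA
  have hAb : (A : ℝ) - b ≠ 0 := sub_ne_zero.2 (Nat.cast_lt.2 hbA).ne'
  set L : ℕ → ℝ := fun n => f b + ((n : ℝ) - b) * ((f A - f b) / ((A : ℝ) - b))
  have hL : ∀ n : ℕ, L n = f b + (((n : ℝ) - b) / ((A : ℝ) - b)) * (f A - f b) := fun n => by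
    simp only [L]; ring
  have herror := abs_le_of_abs_secondDiff_le (w := fun n => L n - f n) (H := H)
    (by simp [L]) (by simp only [L]; field_simp; ring)
    (fun n hbn hnA => by
      rw [secondDiff_sub, secondDiff_affine, zero_sub, abs_neg]
      exact hsecond n hbn hnA)
    hba haA
  simpa only [hL] using herror

/-- If the absolute second forward differences of `f` on `{b,…,A}` are
bounded by `H`, then the linear interpolant between `(b, f b)` and `(A, f A)` satisfies
the error bound `|L(a) − f(a)| ≤ (H/2)·(a−b)·(A−a)` for all `b ≤ a ≤ A`. -/
theorem linear_interpolation_error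
    (b A : ℕ) (hbA : b < A) (f : ℕ → ℝ) (H : ℝ) (hH : 0 ≤ H)
    (hsecond : ∀ a : ℕ, b ≤ a → a + 2 ≤ A →
      |f (a + 2) - 2 * f (a + 1) + f a| ≤ H) :
    ∀ a : ℕ, b ≤ a → a ≤ A →
      |f b + (((a : ℝ) - (b : ℝ)) / ((A : ℝ) - (b : ℝ))) * (f A - f b) - f a| ≤
        H / 2 * ((a : ℝ) - (b : ℝ)) * ((A : ℝ) - (a : ℝ)) :=
  linear_interpolation_error_general b A hbA f H hsecond
end
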